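/- arXiv:2506.09051 — 6 statements merged into one kernel-verified Lean document; each statement's English description precedes it below -/
import Mathlib

section
/- Let I = ⟨u_1,...,u_r⟩ be a complete intersection monomial ideal in a polynomial ring S over a field (so u_1,...,u_r are monomials forming a regular sequence with pairwise coprime supports). Then for all nonnegative integers b_1,...,b_r with ∑ b_i ≤ n, the colon ideal (I^n : u_1^{b_1}···u_r^{b_r}) equals I^{n − ∑ b_i}. -/
open MvPolynomial Ideal Function

/-! `I ^ n` is the monomial ideal generated by the `x ^ (∑ aₗ • eₗ)` with `n ≤ ∑ aₗ`. If
`g * x ^ (∑ bₗ • eₗ) ∈ I ^ n`, every exponent `c` of `g` satisfies `∑ aₗ • eₗ ≤ c + ∑ bₗ • eₗ`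
for such an `a`. As the `eₗ` have disjoint supports, this inequality splits into one inequality
per generator, which gives `∑ (aₗ - bₗ) • eₗ ≤ c`, and `n - ∑ bₗ ≤ ∑ (aₗ - bₗ)`. -/

namespace Finsupp

variable {σ ι : Type*} [Fintype ι] {e : ι → σ →₀ ℕ}

theorem sum_smul_apply_of_mem_support (hdisj : Pairwise (Disjoint on fun l => (e l).support))
    (a : ι → ℕ) {l : ι} {i : σ} (hi : i ∈ (e l).support) :
    (∑ k, a k • e k) i = a l * e l i := by
  rw [finsetSum_apply, Finset.sum_eq_single l (fun k _ hk => ?_) (by simp)]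
  · rfl
  · rw [smul_apply, notMem_support_iff.mp (Finset.disjoint_right.mp (hdisj hk) hi), smul_zero]

theorem sum_tsub_smul_le_of_le_add (hdisj : Pairwise (Disjoint on fun l => (e l).support))
    {a b : ι → ℕ} {c : σ →₀ ℕ} (h : ∑ l, a l • e l ≤ c + ∑ l, b l • e l) :
    ∑ l, (a l - b l) • e l ≤ c := by
  intro i
  by_cases hi : ∃ l, i ∈ (e l).support
  · obtain ⟨l, hl⟩ := hi
    have hil := h i
    rw [add_apply, sum_smul_apply_of_mem_support hdisj _ hl,
      sum_smul_apply_of_mem_support hdisj _ hl] at hil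
    rw [sum_smul_apply_of_mem_support hdisj _ hl, Nat.sub_mul]
    omega
  · have hzero : ∀ k, e k i = 0 := fun k => notMem_support_iff.mp (not_exists.mp hi k)
    simp [hzero]

end Finsupp

namespace MvPolynomial

variable {R σ ι : Type*} [CommSemiring R] [Fintype ι] (e : ι → σ →₀ ℕ)

theorem prod_monomial_one_pow (a : ι → ℕ) :
    ∏ l, monomial (e l) (1 : R) ^ a l = monomial (∑ l, a l • e l) 1 := by
  simp_rw [monomial_pow, one_pow, monomial_sum_one]

theorem monomial_sum_smul_mem_span_pow (a : ι → ℕ) :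
    monomial (∑ l, a l • e l) (1 : R) ∈
      span (Set.range fun l => monomial (e l) (1 : R)) ^ ∑ l, a l := by
  rw [← prod_monomial_one_pow, ← Finset.prod_pow_eq_pow_sum]
  exact prod_mem_prod fun l _ => pow_mem_pow (subset_span (Set.mem_range_self l)) _

theorem span_range_monomial_pow_le (n : ℕ) :
    span (Set.range fun l => monomial (e l) (1 : R)) ^ n ≤
      span ((fun d => monomial d (1 : R)) ''
        ((fun a : ι → ℕ => ∑ l, a l • e l) '' {a | ∑ l, a l = n})) := by
  classical
  induction n with
  | zero =>
    rw [pow_zero, one_eq_top, top_le_iff, eq_top_iff_one]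
    exact subset_span ⟨0, ⟨0, by simp, by simp⟩, by simp⟩
  | succ n ih =>
    rw [pow_succ]
    refine (mul_mono_left ih).trans ?_
    rw [span_mul_span', span_le]
    rintro _ ⟨_, ⟨_, ⟨a, ha, rfl⟩, rfl⟩, _, ⟨l, rfl⟩, rfl⟩
    refine subset_span ⟨_, ⟨a + Pi.single l 1, ?_, rfl⟩, ?_⟩
    · simp_all [Finset.sum_add_distrib]
    · simp [add_smul, Finset.sum_add_distrib, monomial_mul]

theorem span_range_monomial_pow (n : ℕ) :
    span (Set.range fun l => monomial (e l) (1 : R)) ^ n =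
      span ((fun d => monomial d (1 : R)) ''
        ((fun a : ι → ℕ => ∑ l, a l • e l) '' {a | n ≤ ∑ l, a l})) := by
  refine le_antisymm ((span_range_monomial_pow_le e n).trans (span_mono ?_)) (span_le.mpr ?_)
  · exact Set.image_mono (Set.image_mono fun a ha => ha.ge)
  · rintro _ ⟨_, ⟨a, ha, rfl⟩, rfl⟩
    exact pow_le_pow_right ha (monomial_sum_smul_mem_span_pow e a)

variable {e} in
theorem colon_span_range_monomial_pow (hdisj : Pairwise (Disjoint on fun l => (e l).support))
    (n : ℕ) (b : ι → ℕ) :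
    (span (Set.range fun l => monomial (e l) (1 : R)) ^ n).colon
        (span {monomial (∑ l, b l • e l) (1 : R)}) =
      span (Set.range fun l => monomial (e l) (1 : R)) ^ (n - ∑ l, b l) := by
  ext g
  rw [mem_colon_span_singleton]
  constructor
  · rw [span_range_monomial_pow, span_range_monomial_pow, mem_ideal_span_monomial_image,
      mem_ideal_span_monomial_image]
    intro hg c hc
    have hcb : c + ∑ l, b l • e l ∈ (g * monomial (∑ l, b l • e l) 1).support := by
      rwa [mem_support_iff, coeff_mul_monomial, mul_one, ← mem_support_iff]
    obtain ⟨_, ⟨a, ha, rfl⟩, hle⟩ := hg _ hcb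
    refine ⟨_, ⟨fun l => a l - b l, ?_, rfl⟩, Finsupp.sum_tsub_smul_le_of_le_add hdisj hle⟩
    calc n - ∑ l, b l ≤ ∑ l, a l - ∑ l, b l := tsub_le_tsub_right ha _
      _ ≤ ∑ l, (a l - b l) := tsub_le_iff_right.mpr <| by
          rw [← Finset.sum_add_distrib]
          exact Finset.sum_le_sum fun l _ => le_tsub_add
  · intro hg
    have hprod := mul_mem_mul hg (monomial_sum_smul_mem_span_pow e b)
    rw [← pow_add] at hprod
    exact pow_le_pow_right le_tsub_add hprod

end MvPolynomial

theorem colon_pow_complete_intersection_general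
    {K : Type*} [Field K] {σ : Type*} (r : ℕ) (e : Fin r → (σ →₀ ℕ))
    (hdisj : ∀ l l', l ≠ l' → Disjoint (e l).support (e l').support)
    (u : Fin r → MvPolynomial σ K) (hu : ∀ l, u l = monomial (e l) 1)
    (I : Ideal (MvPolynomial σ K)) (hI : I = Ideal.span (Set.range u))
    (n : ℕ) (b : Fin r → ℕ) :
    Submodule.colon (I ^ n) (Ideal.span {∏ l, u l ^ b l}) = I ^ (n - ∑ l, b l) := by
  obtain rfl : u = fun l => monomial (e l) 1 := funext hu
  subst hI
  rw [prod_monomial_one_pow]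
  exact colon_span_range_monomial_pow (fun l l' => hdisj l l') n b

/-- Colon of powers of a complete intersection monomial ideal:
the generators are monomials `u l = x^(e l)` with pairwise disjoint supports (pairwise
coprime), each nonconstant, so that they form a regular sequence.  Then
`(I^n : u_1^{b_1} ⋯ u_r^{b_r}) = I^{n - ∑ b_i}` whenever `∑ b_i ≤ n`. -/
theorem colon_pow_complete_intersection
    {K : Type*} [Field K] {σ : Type*} (r : ℕ) (e : Fin r → (σ →₀ ℕ))
    (he : ∀ l, e l ≠ 0)
    (hdisj : ∀ l l', l ≠ l' → Disjoint (e l).support (e l').support)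
    (u : Fin r → MvPolynomial σ K) (hu : ∀ l, u l = monomial (e l) 1)
    (I : Ideal (MvPolynomial σ K)) (hI : I = Ideal.span (Set.range u))
    (n : ℕ) (b : Fin r → ℕ) (hb : ∑ l, b l ≤ n) :
    Submodule.colon (I ^ n) (Ideal.span {∏ l, u l ^ b l}) = I ^ (n - ∑ l, b l) :=
  colon_pow_complete_intersection_general r e hdisj u hu I hI n b
end

section
/- Let I = ⟨u_1,...,u_r⟩ be a complete intersection monomial ideal in S = K[x_1,...,x_m] and let P = ⟨y_1,...,y_r⟩ be an associated prime of I with y_i ∈ supp(u_i) for each i. Set f = (∏_{i=1}^r u_i) / (∏_{i=1}^r y_i). Then (I : f) = P, and moreover for any monomial g with (I : g) = P, the monomial f divides g. Consequently v_P(I) = ∑_{i=1}^r deg u_i − r. -/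
/-!
For a monomial ideal `I = (x^{e_i})` the colon `(I : x^a)` is the monomial ideal generated by the
`x^{e_i - a}`. Since the `e_i` have disjoint supports and `y_i ∈ supp e_i`, it equals
`P = (x_{y_i})` exactly when `e_i - a = y_i` for every `i`, and the least such `a` is
`g = ∑ (e_i - y_i)`. For an arbitrary `f` with `(I : f) = P`, any term `x^a` of `f` outside `I`
already has this property, because `x_{y_i} x^a` must lie in `I` for each `i`; so `deg f ≥ deg g`.
-/

open MvPolynomial Ideal

/-- The local v-number of `J` at a prime `P`: the least degree of a homogeneous `f`
with `(J : f) = P`. -/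
noncomputable def vnumberAt {K : Type*} [Field K] {σ : Type*}
    (J P : Ideal (MvPolynomial σ K)) : ℕ :=
  sInf {d : ℕ | ∃ f : MvPolynomial σ K, f.IsHomogeneous d ∧
    Submodule.colon J (Ideal.span {f}) = P}

namespace Finsupp

variable {ι σ : Type*} {e f : ι → σ →₀ ℕ} {y : ι → σ} {a : σ →₀ ℕ}

theorem single_one_le_of_mem_support {d : σ →₀ ℕ} {x : σ} (hx : x ∈ d.support) :
    single x 1 ≤ d :=
  single_le_iff.2 (Nat.one_le_iff_ne_zero.2 (mem_support_iff.1 hx))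

theorem eq_single_one_of_le_of_ne_zero {d : σ →₀ ℕ} {x : σ} (hle : d ≤ single x 1)
    (hne : d ≠ 0) : d = single x 1 := by
  obtain ⟨z, hz⟩ := support_nonempty_iff.2 hne
  obtain rfl : z = x := by
    by_contra h
    have := hle z
    simp_all [single_eq_of_ne]
  exact le_antisymm hle (single_one_le_of_mem_support hz)

theorem degree_sum_tsub_single [Fintype ι] (hy : ∀ i, y i ∈ (e i).support) :
    degree (∑ i, (e i - single (y i) 1)) = ∑ i, degree (e i) - Fintype.card ι := by
  have h i : degree (e i) = degree (e i - single (y i) 1) + 1 := by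
    conv_lhs => rw [← tsub_add_cancel_of_le (single_one_le_of_mem_support (hy i))]
    rw [map_add, degree_single]
  simp only [h, Finset.sum_add_distrib, map_sum, Finset.sum_const, Finset.card_univ, smul_eq_mul,
    mul_one, Nat.add_sub_cancel]

section Disjoint

variable (hdisj : Pairwise fun i j => Disjoint (e i).support (e j).support)
include hdisj

theorem eq_of_mem_support_of_mem_support {i j : ι} {x : σ} (hi : x ∈ (e i).support)
    (hj : x ∈ (e j).support) : i = j := by
  by_contra h
  exact Finset.disjoint_left.1 (hdisj h) hi hj

theorem sum_apply_of_mem_support [Fintype ι] (hfe : ∀ i, f i ≤ e i) {i : ι} {x : σ}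
    (hx : x ∈ (e i).support) : (∑ j, f j) x = f i x := by
  rw [finsetSum_apply]
  refine Finset.sum_eq_single i (fun j _ hji => ?_) (by simp)
  have : e j x = 0 :=
    notMem_support_iff.1 fun hj => hji (eq_of_mem_support_of_mem_support hdisj hj hx)
  exact Nat.eq_zero_of_le_zero (this ▸ hfe j x)

theorem sum_le_of_le_of_pairwise_disjoint [Fintype ι] (hfe : ∀ i, f i ≤ e i)
    (hfa : ∀ i, f i ≤ a) : ∑ i, f i ≤ a := by
  intro x
  by_cases hx : ∃ i, x ∈ (e i).support
  · obtain ⟨i, hi⟩ := hx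
    rw [sum_apply_of_mem_support hdisj hfe hi]
    exact hfa i x
  · push Not at hx
    rw [finsetSum_apply, Finset.sum_eq_zero fun i _ => ?_]
    · exact Nat.zero_le _
    · exact Nat.eq_zero_of_le_zero (notMem_support_iff.1 (hx i) ▸ hfe i x)

theorem tsub_sum_tsub_single [Fintype ι] (hy : ∀ i, y i ∈ (e i).support) (i : ι) :
    e i - ∑ j, (e j - single (y j) 1) = single (y i) 1 := by
  ext x
  by_cases hx : x ∈ (e i).support
  · rw [tsub_apply, sum_apply_of_mem_support hdisj (fun j => tsub_le_self) hx, tsub_apply,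
      Nat.sub_sub_self (single_one_le_of_mem_support (hy i) x)]
  · have hxy : x ≠ y i := fun h => hx (h ▸ hy i)
    simp_all [single_eq_of_ne]

theorem sum_tsub_single_le [Fintype ι] (h : ∀ i, e i - a = single (y i) 1) :
    ∑ i, (e i - single (y i) 1) ≤ a :=
  sum_le_of_le_of_pairwise_disjoint hdisj (fun _ => tsub_le_self)
    fun i => tsub_le_iff_left.2 (tsub_le_iff_right.1 (h i).le)

theorem tsub_eq_single_of_forall_exists_tsub_le (hy : ∀ i, y i ∈ (e i).support)
    (hnot : ∀ i, ¬ e i ≤ a) (hle : ∀ i, ∃ j, e j - a ≤ single (y i) 1) (i : ι) :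
    e i - a = single (y i) 1 := by
  obtain ⟨j, hj⟩ := hle i
  have heq : e j - a = single (y i) 1 :=
    eq_single_one_of_le_of_ne_zero hj fun h => hnot j (tsub_eq_zero_iff_le.1 h)
  have hyj : y i ∈ (e j - a).support := by simp [heq]
  obtain rfl := eq_of_mem_support_of_mem_support hdisj (support_tsub hyj) (hy i)
  exact heq

end Disjoint

end Finsupp

namespace MvPolynomial

variable {ι σ R : Type*} [CommSemiring R] {e : ι → σ →₀ ℕ}

variable (R) in
noncomputable def monomialIdeal (e : ι → σ →₀ ℕ) : Ideal (MvPolynomial σ R) :=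
  Ideal.span (Set.range fun i => monomial (e i) 1)

theorem mem_monomialIdeal_iff {p : MvPolynomial σ R} :
    p ∈ monomialIdeal R e ↔ ∀ m ∈ p.support, ∃ i, e i ≤ m := by
  rw [monomialIdeal, Set.range_comp' (fun s => monomial s (1 : R)) e,
    mem_ideal_span_monomial_image]
  simp

theorem monomialIdeal_ne_top [Nontrivial R] (he : ∀ i, e i ≠ 0) :
    monomialIdeal R e ≠ ⊤ := by
  intro htop
  have hone : (1 : MvPolynomial σ R) ∈ monomialIdeal R e := htop ▸ Submodule.mem_top
  obtain ⟨i, hi⟩ := mem_monomialIdeal_iff.1 hone 0 (by simp)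
  exact he i (nonpos_iff_eq_zero.1 hi)

theorem support_mul_monomial_one (p : MvPolynomial σ R) (a : σ →₀ ℕ) :
    (p * monomial a 1).support = p.support.map (addRightEmbedding a) :=
  AddMonoidAlgebra.support_coeff_mul_single p 1 (by simp) a

theorem monomialIdeal_colon_monomial (a : σ →₀ ℕ) :
    (monomialIdeal R e).colon (span {monomial a (1 : R)}) =
      monomialIdeal R fun i => e i - a := by
  ext p
  simp [mem_monomialIdeal_iff, support_mul_monomial_one, tsub_le_iff_right]

section CompleteIntersection

variable [Nontrivial R] {y : ι → σ}
  (hdisj : Pairwise fun i j => Disjoint (e i).support (e j).support)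
  (hy : ∀ i, y i ∈ (e i).support)
include hdisj hy

theorem exists_mem_support_tsub_eq_single_of_colon_eq {f : MvPolynomial σ R}
    (h : (monomialIdeal R e).colon (span {f}) =
      monomialIdeal R fun i => Finsupp.single (y i) 1) :
    ∃ a ∈ f.support, ∀ i, e i - a = Finsupp.single (y i) 1 := by
  have hf : f ∉ monomialIdeal R e := fun hf =>
    monomialIdeal_ne_top (fun i => Finsupp.single_ne_zero.2 one_ne_zero)
      ((eq_top_iff_one _).2 (h ▸ mem_colon_span_singleton.2 ((one_mul f).symm ▸ hf)))
  simp only [mem_monomialIdeal_iff, not_forall, not_exists] at hf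
  obtain ⟨a, ha, hnot⟩ := hf
  refine ⟨a, ha, Finsupp.tsub_eq_single_of_forall_exists_tsub_le hdisj hy hnot fun i => ?_⟩
  have hX : X (y i) * f ∈ monomialIdeal R e :=
    mem_colon_span_singleton.1 (h ▸ subset_span ⟨i, rfl⟩)
  obtain ⟨j, hj⟩ := mem_monomialIdeal_iff.1 hX (Finsupp.single (y i) 1 + a) (by simpa using ha)
  exact ⟨j, tsub_le_iff_right.2 hj⟩

theorem colon_monomial_eq_iff (a : σ →₀ ℕ) :
    (monomialIdeal R e).colon (span {monomial a (1 : R)}) =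
        monomialIdeal R (fun i => Finsupp.single (y i) 1) ↔
      ∀ i, e i - a = Finsupp.single (y i) 1 := by
  refine ⟨fun h => ?_, fun h => ?_⟩
  · obtain ⟨b, hb, hbe⟩ := exists_mem_support_tsub_eq_single_of_colon_eq hdisj hy h
    rwa [Finset.mem_singleton.1 (support_monomial_subset hb)] at hbe
  · rw [monomialIdeal_colon_monomial]
    simp only [h]

end CompleteIntersection

end MvPolynomial

theorem vnumberAt_complete_intersection_general
    {K : Type*} [Field K] {σ : Type*} (r : ℕ) (e : Fin r → (σ →₀ ℕ))
    (hdisj : ∀ l l', l ≠ l' → Disjoint (e l).support (e l').support)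
    (u : Fin r → MvPolynomial σ K) (hu : ∀ l, u l = monomial (e l) 1)
    (I : Ideal (MvPolynomial σ K)) (hI : I = Ideal.span (Set.range u))
    (y : Fin r → σ) (hy : ∀ l, y l ∈ (e l).support)
    (P : Ideal (MvPolynomial σ K))
    (hP : P = Ideal.span (Set.range fun l => (X (y l) : MvPolynomial σ K)))
    (g : σ →₀ ℕ) (hg : g = ∑ l, (e l - Finsupp.single (y l) 1)) :
    Submodule.colon I (Ideal.span {(monomial g 1 : MvPolynomial σ K)}) = P ∧
    (∀ a : σ →₀ ℕ,
      Submodule.colon I (Ideal.span {(monomial a 1 : MvPolynomial σ K)}) = P → g ≤ a) ∧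
    vnumberAt I P = (∑ l, (e l).sum fun _ k => k) - r := by
  obtain rfl : u = fun l => monomial (e l) 1 := funext hu
  subst hI hP hg
  have hcolon := colon_monomial_eq_iff (R := K) hdisj hy
  have hgP := (hcolon _).2 (Finsupp.tsub_sum_tsub_single hdisj hy)
  refine ⟨hgP, fun a ha => Finsupp.sum_tsub_single_le hdisj ((hcolon a).1 ha), ?_⟩
  have hdeg : (∑ l, (e l - Finsupp.single (y l) 1)).degree =
      (∑ l, (e l).sum fun _ k => k) - r := by
    rw [Finsupp.degree_sum_tsub_single hy, Fintype.card_fin]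
    rfl
  refine IsLeast.csInf_eq ⟨⟨_, isHomogeneous_monomial _ hdeg, hgP⟩, ?_⟩
  rintro d ⟨f, hf, hfP⟩
  obtain ⟨a, ha, hae⟩ := exists_mem_support_tsub_eq_single_of_colon_eq hdisj hy hfP
  calc _ = (∑ l, (e l - Finsupp.single (y l) 1)).degree := hdeg.symm
    _ ≤ a.degree := Finsupp.degree_mono (Finsupp.sum_tsub_single_le hdisj hae)
    _ = d := by_contra fun h => mem_support_iff.1 ha (hf.coeff_eq_zero h)

/-- For a complete intersection monomial ideal `I = ⟨u_1,…,u_r⟩` (monomials with pairwise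
disjoint supports), an associated prime `P = ⟨y_1,…,y_r⟩` with `y i ∈ supp (u i)`, and
`f = (∏ u_i)/(∏ y_i)` (with exponent vector `g`): `(I : f) = P`, every monomial `m` with
`(I : m) = P` is divisible by `f`, and `v_P(I) = ∑ deg u_i − r`. -/
theorem vnumberAt_complete_intersection
    {K : Type*} [Field K] {σ : Type*} (r : ℕ) (e : Fin r → (σ →₀ ℕ))
    (he : ∀ l, e l ≠ 0)
    (hdisj : ∀ l l', l ≠ l' → Disjoint (e l).support (e l').support)
    (u : Fin r → MvPolynomial σ K) (hu : ∀ l, u l = monomial (e l) 1)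
    (I : Ideal (MvPolynomial σ K)) (hI : I = Ideal.span (Set.range u))
    (y : Fin r → σ) (hy : ∀ l, y l ∈ (e l).support)
    (P : Ideal (MvPolynomial σ K))
    (hP : P = Ideal.span (Set.range fun l => (X (y l) : MvPolynomial σ K)))
    (hPass : P ∈ associatedPrimes (MvPolynomial σ K) (MvPolynomial σ K ⧸ I))
    (g : σ →₀ ℕ) (hg : g = ∑ l, (e l - Finsupp.single (y l) 1)) :
    Submodule.colon I (Ideal.span {(monomial g 1 : MvPolynomial σ K)}) = P ∧
    (∀ a : σ →₀ ℕ,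
      Submodule.colon I (Ideal.span {(monomial a 1 : MvPolynomial σ K)}) = P → g ≤ a) ∧
    vnumberAt I P = (∑ l, (e l).sum fun _ k => k) - r :=
  vnumberAt_complete_intersection_general r e hdisj u hu I hI y hy P hP g hg
end

section
/- Let I = ⟨u_1,...,u_r⟩ be a complete intersection monomial ideal in S. Then for every associated prime P of I and every n ≥ 1, v(I^n) = v_P(I^n) = n·α(I) + v(I) − α(I), where v(I) = ∑_{i=1}^r deg u_i − r and α(I) is the initial degree of I. -/
open MvPolynomial Ideal

/-- The v-number of a homogeneous ideal `J`. -/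
noncomputable def vnumber {K : Type*} [Field K] {σ : Type*}
    (J : Ideal (MvPolynomial σ K)) : ℕ :=
  sInf {d : ℕ | ∃ f : MvPolynomial σ K, f.IsHomogeneous d ∧
    Submodule.colon J (Ideal.span {f}) ∈
      associatedPrimes (MvPolynomial σ K) (MvPolynomial σ K ⧸ J)}

/-!
Write `I = (u_1, …, u_r)` with `u_l = x^{e_l}` of pairwise disjoint supports. Then
`x^m ∈ I ^ n` iff `n ≤ ∑ l, maxPow (e l) m`, where `maxPow (e l) m` is the exponent of the largest
power of `u_l` dividing `x^m`.

`I` is the intersection, over all choices `c` of one variable `x_{c l}` in each `u_l`, of the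
ideals `(x_{c l}^{e_l(c l)})_l`, which are primary to `(x_{c l})_l`; hence every associated prime
of `I` is of the form `P = (x_{c l})_l`. For such `P` and `u_{l₀}` of least degree `α(I)`, the
monomial `f = u_{l₀}^{n-1} ∏_l u_l / x_{c l}` satisfies `(I ^ n : f) = P`.

Conversely, if `(I ^ n : g)` is prime for a homogeneous `g`, it contains some `u_l ^ n`, hence a
variable `x_{i_l}` dividing `u_l`, for every `l`. A monomial `x^m` of `g` outside `I ^ n` with all
`x_{i_l} x^m ∈ I ^ n` has `∑ maxPow (e l) m = n - 1` and
`(maxPow (e l) m + 1) • e l ≤ m + single i_l 1` for every `l`, which forces `deg m ≥ deg f`.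
-/

open Function

/-! ### Associated primes and primary decompositions -/

namespace Ideal

variable {R : Type*} [CommRing R]

theorem colon_bot_singleton_mk (J : Ideal R) (g : R) :
    (⊥ : Submodule R (R ⧸ J)).colon {Quotient.mk J g} = J.colon {g} := by
  ext y
  simp [Submodule.mem_colon_singleton, Algebra.smul_def, ← map_mul, Quotient.eq_zero_iff_mem]

theorem mem_associatedPrimes_of_colon_eq {J P : Ideal R} (hP : P.IsPrime) {f : R}
    (h : J.colon {f} = P) : P ∈ associatedPrimes R (R ⧸ J) :=
  ⟨hP, Quotient.mk J f, by rw [colon_bot_singleton_mk, h, hP.radical]⟩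

theorem exists_eq_radical_of_mem_associatedPrimes_finsetInf {ι : Type*} {s : Finset ι}
    {q : ι → Ideal R} (hq : ∀ i ∈ s, (q i).IsPrimary) {P : Ideal R}
    (hP : P ∈ associatedPrimes R (R ⧸ s.inf q)) : ∃ i ∈ s, P = (q i).radical := by
  obtain ⟨hPp, x, hx⟩ := hP
  obtain ⟨g, rfl⟩ := Quotient.mk_surjective x
  rw [colon_bot_singleton_mk, Submodule.colon_finsetInf] at hx
  obtain ⟨i, hi, hle⟩ := (hPp.inf_le' (f := fun i => (q i).colon {g})).1 (hx ▸ le_radical)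
  have hPi : P = ((q i).colon {g}).radical :=
    le_antisymm (hx ▸ radical_mono (Finset.inf_le hi)) (hPp.radical_le_iff.2 hle)
  have hg : g ∉ q i := fun hg => hPp.ne_top <| by
    rwa [hPi, radical_eq_top, Submodule.colon_eq_top_iff_subset, Set.singleton_subset_iff]
  refine ⟨i, hi, ?_⟩
  rw [hPi, (hq i hi).radical_colon_singleton_of_notMem hg, Submodule.colon_univ]

theorem span_range_pow {ι A : Type*} [CommSemiring A] (u : ι → A) (n : ℕ) :
    span (Set.range u) ^ n =
      span ((fun a : ι →₀ ℕ => a.prod fun l k => u l ^ k) '' {a | a.degree = n}) := by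
  rw [Ideal.span, Submodule.span_pow, ← Set.image_univ, Finsupp.image_pow_eq_finsuppProd_image]
  simp

end Ideal

/-! ### Exponent vectors -/

namespace Finsupp

variable {σ ι : Type*}

theorem degree_tsub_add_degree {x y : σ →₀ ℕ} (h : y ≤ x) :
    (x - y).degree + y.degree = x.degree := by
  rw [← map_add, tsub_add_cancel_of_le h]

theorem finsetSum_le_iff_of_pairwise_disjoint {s : Finset ι} {x : ι → σ →₀ ℕ}
    (hx : Pairwise (Disjoint on fun l => (x l).support)) {m : σ →₀ ℕ} :
    ∑ l ∈ s, x l ≤ m ↔ ∀ l ∈ s, x l ≤ m := by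
  classical
  refine ⟨fun h l hl => (Finset.single_le_sum (fun _ _ => zero_le) hl).trans h, fun h j => ?_⟩
  rw [finsetSum_apply]
  by_cases hj : ∃ l ∈ s, j ∈ (x l).support
  · obtain ⟨l, hl, hjl⟩ := hj
    rw [Finset.sum_eq_single l (fun k _ hkl => notMem_support_iff.1 fun hjk =>
      Finset.disjoint_left.1 (hx hkl) hjk hjl) (absurd hl)]
    exact h l hl j
  · push Not at hj
    simp [Finset.sum_eq_zero fun l hl => notMem_support_iff.1 (hj l hl)]

theorem exists_le_iff_forall_exists_apply_le {e : ι → σ →₀ ℕ} {m : σ →₀ ℕ} :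
    (∃ l, e l ≤ m) ↔ ∀ c : (l : ι) → (e l).support, ∃ l, e l (c l) ≤ m (c l) := by
  refine ⟨fun ⟨l, hl⟩ c => ⟨l, hl _⟩, fun h => ?_⟩
  by_contra! hlt
  simp only [le_iff, not_forall, not_le] at hlt
  choose c hc hlt using hlt
  obtain ⟨l, hl⟩ := h fun l => ⟨c l, hc l⟩
  exact (hlt l).not_ge hl

theorem weight_indicator_single_one_apply (T : Set σ) (m : σ →₀ ℕ) (j : σ) :
    weight (T.indicator fun i => single i 1) m j = T.indicator m j := by
  classical
  simp only [weight_apply, Finsupp.sum, finsetSum_apply, smul_apply, Set.indicator_apply]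
  split_ifs with hj
  · rw [Finset.sum_eq_single j] <;> aesop
  · exact Finset.sum_eq_zero fun i _ => by aesop (add simp single_apply)

theorem le_weight_indicator_single_one_iff {T : Set σ} {a : σ →₀ ℕ} (ha : ↑a.support ⊆ T)
    (m : σ →₀ ℕ) : a ≤ weight (T.indicator fun i => single i 1) m ↔ a ≤ m := by
  classical
  refine forall_congr' fun j => ?_
  rw [weight_indicator_single_one_apply, Set.indicator_apply]
  split_ifs with hj
  · rfl
  · simp [notMem_support_iff.1 fun h => hj (ha h)]

/-- The exponent of the highest power of `x^e` dividing `x^m` (junk value `0` when `e = 0`). -/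
noncomputable def maxPow (e m : σ →₀ ℕ) : ℕ := sSup {t | t • e ≤ m}

variable {e m : σ →₀ ℕ}

theorem le_maxPow_iff (he : e ≠ 0) {t : ℕ} : t ≤ maxPow e m ↔ t • e ≤ m := by
  obtain ⟨i, hi⟩ := Finsupp.ne_iff.1 he
  have hbdd : BddAbove {t | t • e ≤ m} := ⟨m i, fun t ht => by
    have := ht i
    simp only [smul_apply, smul_eq_mul, coe_zero, Pi.zero_apply] at this hi
    nlinarith [Nat.pos_of_ne_zero hi]⟩
  exact ⟨fun ht => (nsmul_le_nsmul_left zero_le ht).trans (Nat.sSup_mem ⟨0, by simp⟩ hbdd),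
    fun ht => le_csSup hbdd ht⟩

theorem maxPow_le_div {i : σ} (hi : i ∈ e.support) : maxPow e m ≤ m i / e i := by
  have he : e ≠ 0 := by rintro rfl; simp at hi
  have := (le_maxPow_iff he).1 (le_refl (maxPow e m)) i
  rw [smul_apply, smul_eq_mul] at this
  exact (Nat.le_div_iff_mul_le (Nat.pos_of_ne_zero (mem_support_iff.1 hi))).2 this

theorem maxPow_add_single_of_notMem {i : σ} (hi : i ∉ e.support) :
    maxPow e (m + single i 1) = maxPow e m := by
  unfold maxPow
  congr 1
  ext t
  refine forall_congr' fun j => ?_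
  by_cases hj : j = i
  · subst hj
    simp [notMem_support_iff.1 hi]
  · simp [Ne.symm hj]

theorem maxPow_add_single_le (he : e ≠ 0) (i : σ) :
    maxPow e (m + single i 1) ≤ maxPow e m + 1 := by
  set t := maxPow e (m + single i 1)
  have ht := (le_maxPow_iff he).1 (le_refl t)
  suffices (t - 1) • e ≤ m by have := (le_maxPow_iff he).2 this; omega
  intro j
  have := ht j
  simp only [smul_apply, smul_eq_mul, add_apply] at this ⊢
  by_cases hij : j = i
  · subst hij
    rcases Nat.eq_zero_or_pos (e j) with h0 | hpos
    · simp [h0]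
    · rw [Nat.sub_one_mul]
      simp only [single_eq_same] at this
      omega
  · exact (Nat.mul_le_mul_right _ (Nat.sub_le t 1)).trans (by simpa [Ne.symm hij] using this)

theorem exists_degree_eq_sum_smul_le_iff [Fintype ι] {e : ι → σ →₀ ℕ} (he : ∀ l, e l ≠ 0)
    (hdisj : Pairwise (Disjoint on fun l => (e l).support)) {n : ℕ} :
    (∃ a : ι →₀ ℕ, a.degree = n ∧ (a.sum fun l k => k • e l) ≤ m) ↔
      n ≤ ∑ l, maxPow (e l) m := by
  let b : ι →₀ ℕ := equivFunOnFinite.symm fun l => maxPow (e l) m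
  have hle (a : ι →₀ ℕ) : (a.sum fun l k => k • e l) ≤ m ↔ a ≤ b := by
    rw [Finsupp.sum, finsetSum_le_iff_of_pairwise_disjoint, le_iff]
    · simp [b, le_maxPow_iff (he _)]
    · exact hdisj.mono fun l l' h => Finset.disjoint_of_subset_left support_smul
        (Finset.disjoint_of_subset_right support_smul h)
  simp only [hle]
  rw [← show b.degree = ∑ l, maxPow (e l) m by simp [b, degree_eq_sum]]
  exact ⟨fun ⟨a, ha, hab⟩ => ha ▸ degree_mono hab,
    fun h => let ⟨a, hab, ha⟩ := exists_le_degree_eq b n h; ⟨a, ha, hab⟩⟩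

end Finsupp

/-! ### Prime and primary monomial ideals -/

namespace MvPolynomial

variable {σ R ι : Type*}

theorem isPrime_span_X_image [CommRing R] [IsDomain R] (T : Set σ) :
    (span (X '' T) : Ideal (MvPolynomial σ R)).IsPrime := by
  classical
  let φ : MvPolynomial σ R →ₐ[R] MvPolynomial σ R := aeval fun i => if i ∈ T then 0 else X i
  have hφX (i : σ) : φ (X i) = if i ∈ T then 0 else X i := aeval_X _ _
  have hsub (f : MvPolynomial σ R) : f - φ f ∈ span (X '' T) := by
    induction f using MvPolynomial.induction_on with
    | C a => simp [φ]
    | add p q hp hq => simpa [add_sub_add_comm] using add_mem hp hq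
    | mul_X p i hp =>
      rw [map_mul, hφX]
      split_ifs with hi
      · simpa using mul_mem_left _ p (subset_span (Set.mem_image_of_mem X hi))
      · simpa [sub_mul] using mul_mem_right (X i) _ hp
  have hker : RingHom.ker φ = span (X '' T) := by
    refine le_antisymm (fun f hf => by simpa [(RingHom.mem_ker).1 hf] using hsub f) ?_
    rw [span_le]
    rintro _ ⟨i, hi, rfl⟩
    simp [hφX, hi]
  rw [← hker]
  exact RingHom.ker_isPrime _

theorem exists_X_mem_of_monomial_mem [CommSemiring R] {P : Ideal (MvPolynomial σ R)}
    (hP : P.IsPrime) {v : σ →₀ ℕ} (hv : monomial v (1 : R) ∈ P) : ∃ i ∈ v.support, X i ∈ P := by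
  rw [monomial_eq, map_one, one_mul, Finsupp.prod] at hv
  obtain ⟨i, hi, hpow⟩ := hP.prod_mem_iff.1 hv
  exact ⟨i, hi, hP.mem_of_pow_mem _ hpow⟩

theorem coeff_mul_eq_coeff_mul_weightedHomogeneousComponent [CommSemiring R] {M : Type*}
    [AddCommMonoid M] [PartialOrder M] [CanonicallyOrderedAdd M] [IsLeftCancelAdd M]
    {w : σ → M} {x y : MvPolynomial σ R} {d : M}
    (hd : ∀ m ∈ x.support, Finsupp.weight w m ≤ d → Finsupp.weight w m = d)
    {ν : σ →₀ ℕ} (hν : Finsupp.weight w ν = d) :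
    coeff ν (x * y) =
      coeff ν (weightedHomogeneousComponent w d x * weightedHomogeneousComponent w 0 y) := by
  classical
  rw [coeff_mul, coeff_mul]
  refine Finset.sum_congr rfl fun ⟨m, μ⟩ hmμ => ?_
  rw [Finset.HasAntidiagonal.mem_antidiagonal] at hmμ
  simp only [coeff_weightedHomogeneousComponent]
  by_cases hx : coeff m x = 0
  · simp [hx]
  have hwν : Finsupp.weight w m + Finsupp.weight w μ = d := by rw [← map_add, hmμ, hν]
  have hm : Finsupp.weight w m = d := hd m (mem_support_iff.2 hx) (hwν ▸ le_self_add)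
  have hμ : Finsupp.weight w μ = 0 := by rwa [hm, add_eq_left] at hwν
  simp [hm, hμ]

/-- Grade by the exponents of the variables in `T`: the product of a minimal graded piece of `x`
lying outside the ideal with the `T`-free part of `y` survives in `x * y`. -/
theorem mul_notMem_span_monomial_image [CommRing R] [IsDomain R] {T : Set σ}
    {A : Set (σ →₀ ℕ)} (hA : ∀ a ∈ A, ↑a.support ⊆ T) {x y : MvPolynomial σ R}
    (hx : x ∉ span ((monomial · 1) '' A)) (hy : y ∉ span (X '' T)) :
    x * y ∉ span ((monomial · 1) '' A) := by
  classical
  set w : σ → σ →₀ ℕ := T.indicator fun i => Finsupp.single i 1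
  have hle {a : σ →₀ ℕ} (ha : a ∈ A) := Finsupp.le_weight_indicator_single_one_iff (hA a ha)
  rw [mem_ideal_span_monomial_image] at hx ⊢
  push Not at hx ⊢
  obtain ⟨m₀, hm₀, hm₀A⟩ := hx
  obtain ⟨d, hdD, hdmin⟩ := Finset.exists_minimal
    (s := (x.support.filter fun m => ∀ a ∈ A, ¬a ≤ m).image (Finsupp.weight w))
    ⟨_, Finset.mem_image_of_mem _ (Finset.mem_filter.2 ⟨hm₀, hm₀A⟩)⟩
  obtain ⟨m₁, hm₁, rfl⟩ := Finset.mem_image.1 hdD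
  have hd (a) (ha : a ∈ A) : ¬a ≤ Finsupp.weight w m₁ := fun h =>
    (Finset.mem_filter.1 hm₁).2 a ha ((hle ha m₁).1 h)
  have hxd (m) (hm : m ∈ x.support) (hmd : Finsupp.weight w m ≤ Finsupp.weight w m₁) :
      Finsupp.weight w m = Finsupp.weight w m₁ :=
    le_antisymm hmd <| hdmin (Finset.mem_image_of_mem _ <| Finset.mem_filter.2
      ⟨hm, fun a ha h => hd a ha (((hle ha m).2 h).trans hmd)⟩) hmd
  have hx₁ : weightedHomogeneousComponent w (Finsupp.weight w m₁) x ≠ 0 := fun h => by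
    simpa [coeff_weightedHomogeneousComponent, mem_support_iff.1 (Finset.mem_filter.1 hm₁).1]
      using congr_arg (coeff m₁) h
  have hy₀ : weightedHomogeneousComponent w 0 y ≠ 0 := fun h => hy <| by
    refine mem_ideal_span_X_image.2 fun μ hμ => ?_
    have hwμ : Finsupp.weight w μ ≠ 0 := fun h0 => mem_support_iff.1 hμ <| by
      simpa [coeff_weightedHomogeneousComponent, h0] using congr_arg (coeff μ) h
    obtain ⟨j, hj⟩ := Finsupp.ne_iff.1 hwμ
    rw [Finsupp.weight_indicator_single_one_apply, Finsupp.coe_zero, Pi.zero_apply] at hj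
    exact ⟨j, Set.mem_of_indicator_ne_zero hj, fun h0 => hj (by simp [h0])⟩
  obtain ⟨ν, hν⟩ := support_nonempty.2 (mul_ne_zero hx₁ hy₀)
  have hwν : Finsupp.weight w ν = Finsupp.weight w m₁ := by
    simpa using (weightedHomogeneousComponent_isWeightedHomogeneous _ x).mul
      (weightedHomogeneousComponent_isWeightedHomogeneous _ y) (mem_support_iff.1 hν)
  refine ⟨ν, ?_, fun a ha h => hd a ha (hwν ▸ (hle ha ν).2 h)⟩
  rwa [mem_support_iff, coeff_mul_eq_coeff_mul_weightedHomogeneousComponent hxd hwν,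
    ← mem_support_iff]

theorem span_monomial_single_le_span_X_image [CommSemiring R] (c : ι → σ) {k : ι → ℕ}
    (hk : ∀ l, k l ≠ 0) :
    span ((monomial · (1 : R)) '' Set.range fun l => Finsupp.single (c l) (k l)) ≤
      span (X '' Set.range c) := by
  rw [span_le, ← Set.range_comp, Set.range_subset_iff]
  intro l
  simpa [← X_pow_eq_monomial] using
    pow_mem_of_mem _ (subset_span (Set.mem_image_of_mem X (Set.mem_range_self l))) _
      (Nat.pos_of_ne_zero (hk l))

theorem radical_span_monomial_single [CommRing R] [IsDomain R] (c : ι → σ) {k : ι → ℕ}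
    (hk : ∀ l, k l ≠ 0) :
    (span ((monomial · (1 : R)) '' Set.range fun l => Finsupp.single (c l) (k l))).radical =
      span (X '' Set.range c) := by
  refine le_antisymm ((isPrime_span_X_image _).radical_le_iff.2
    (span_monomial_single_le_span_X_image c hk)) ?_
  rw [span_le]
  rintro _ ⟨_, ⟨l, rfl⟩, rfl⟩
  exact ⟨k l, subset_span ⟨_, ⟨l, rfl⟩, (X_pow_eq_monomial ..).symm⟩⟩

theorem isPrimary_span_monomial_single [CommRing R] [IsDomain R] (c : ι → σ) {k : ι → ℕ}
    (hk : ∀ l, k l ≠ 0) :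
    (span ((monomial · (1 : R)) '' Set.range fun l => Finsupp.single (c l) (k l))).IsPrimary := by
  refine isPrimary_iff.2 ⟨ne_top_of_le_ne_top (isPrime_span_X_image _).ne_top
    (span_monomial_single_le_span_X_image c hk), fun {x y} hxy => ?_⟩
  rw [radical_span_monomial_single c hk]
  by_contra! h
  refine mul_notMem_span_monomial_image ?_ h.1 h.2 hxy
  rintro _ ⟨l, rfl⟩
  exact (Finset.coe_subset.2 Finsupp.support_single_subset).trans (by simp)

theorem span_monomial_eq_inf [CommSemiring R] [Fintype ι] [DecidableEq ι] (e : ι → σ →₀ ℕ) :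
    span ((monomial · (1 : R)) '' Set.range e) =
      Finset.univ.inf fun c : (l : ι) → (e l).support =>
        span ((monomial · 1) '' Set.range fun l => Finsupp.single (c l : σ) (e l (c l))) := by
  ext f
  simp only [Submodule.mem_finsetInf, Finset.mem_univ, true_imp_iff,
    mem_ideal_span_monomial_image, Set.exists_range_iff, Finsupp.single_le_iff,
    Finsupp.exists_le_iff_forall_exists_apply_le]
  exact ⟨fun h c m hm => h m hm c, fun h m hm c => h c m hm⟩

theorem exists_eq_span_X_image_of_mem_associatedPrimes [CommRing R] [IsDomain R] [Fintype ι]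
    {e : ι → σ →₀ ℕ} {P : Ideal (MvPolynomial σ R)}
    (hP : P ∈ associatedPrimes _ (MvPolynomial σ R ⧸ span ((monomial · (1 : R)) '' Set.range e))) :
    ∃ c : ι → σ, (∀ l, c l ∈ (e l).support) ∧ P = span (X '' Set.range c) := by
  classical
  rw [span_monomial_eq_inf] at hP
  have hk (c : (l : ι) → (e l).support) (l : ι) : e l (c l) ≠ 0 :=
    Finsupp.mem_support_iff.1 (c l).2
  obtain ⟨c, -, rfl⟩ := exists_eq_radical_of_mem_associatedPrimes_finsetInf
    (fun c _ => isPrimary_span_monomial_single _ (hk c)) hP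
  exact ⟨fun l => c l, fun l => (c l).2, radical_span_monomial_single _ (hk c)⟩

/-! ### Powers of an ideal generated by monomials with disjoint supports -/

variable {e : ι → σ →₀ ℕ}

local notation "𝓘" => span ((monomial · (1 : R)) '' Set.range e)

theorem mem_pow_span_monomial_iff [CommSemiring R] (n : ℕ) {f : MvPolynomial σ R} :
    f ∈ 𝓘 ^ n ↔
      ∀ m ∈ f.support, ∃ a : ι →₀ ℕ, a.degree = n ∧ (a.sum fun l k => k • e l) ≤ m := by
  have hprod (a : ι →₀ ℕ) : (a.prod fun l k => monomial (e l) (1 : R) ^ k) =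
      monomial (a.sum fun l k => k • e l) 1 := by
    simp [monomial_finsupp_sum_index, monomial_pow]
  rw [← Set.range_comp, span_range_pow]
  simp only [Function.comp_apply, hprod]
  rw [← Set.image_image (monomial · (1 : R)) (fun a : ι →₀ ℕ => a.sum fun l k => k • e l),
    mem_ideal_span_monomial_image]
  simp

variable [Fintype ι]

theorem mem_pow_span_monomial_iff_maxPow [CommSemiring R] (he : ∀ l, e l ≠ 0)
    (hdisj : Pairwise (Disjoint on fun l => (e l).support)) {n : ℕ} {f : MvPolynomial σ R} :
    f ∈ 𝓘 ^ n ↔ ∀ m ∈ f.support, n ≤ ∑ l, Finsupp.maxPow (e l) m := by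
  simp only [mem_pow_span_monomial_iff, Finsupp.exists_degree_eq_sum_smul_le_iff he hdisj]

noncomputable def witnessExponent (e : ι → σ →₀ ℕ) (c : ι → σ) (l₀ : ι) (n : ℕ) : σ →₀ ℕ :=
  (n - 1) • e l₀ + ∑ l, (e l - Finsupp.single (c l) 1)

variable {c : ι → σ}

theorem degree_witnessExponent (hc : ∀ l, c l ∈ (e l).support) (l₀ : ι) (n : ℕ) :
    (witnessExponent e c l₀ n).degree + Fintype.card ι =
      (n - 1) * (e l₀).degree + ∑ l, (e l).degree := by
  have hle (l : ι) : Finsupp.single (c l) 1 ≤ e l :=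
    Finsupp.single_le_iff.2 (Nat.one_le_iff_ne_zero.2 (Finsupp.mem_support_iff.1 (hc l)))
  simp only [witnessExponent, map_add, map_nsmul, map_sum, smul_eq_mul, add_assoc]
  rw [← Finset.card_univ, Finset.card_eq_sum_ones, ← Finset.sum_add_distrib]
  congr 2
  funext l
  simpa using Finsupp.degree_tsub_add_degree (hle l)

theorem degree_witnessExponent_eq (hc : ∀ l, c l ∈ (e l).support) (l₀ : ι) {n : ℕ}
    (hn : n ≠ 0) :
    (witnessExponent e c l₀ n).degree =
      n * (e l₀).degree + (∑ l, (e l).degree - Fintype.card ι) - (e l₀).degree := by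
  have hdeg := degree_witnessExponent hc l₀ n
  have hcard : Fintype.card ι ≤ ∑ l, (e l).degree := by
    simpa using Finset.sum_le_sum fun l (_ : l ∈ Finset.univ) =>
      (Finsupp.le_degree (c l) (e l)).trans' (Finsupp.mem_support_iff.1 (hc l)).bot_lt
  have hn' : n * (e l₀).degree = (n - 1) * (e l₀).degree + (e l₀).degree := by
    rw [← add_one_mul, Nat.sub_add_cancel (Nat.one_le_iff_ne_zero.2 hn)]
  omega

theorem witnessExponent_apply (hdisj : Pairwise (Disjoint on fun l => (e l).support))
    (hc : ∀ l, c l ∈ (e l).support) (l₀ : ι) (n : ℕ) (l : ι) :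
    witnessExponent e c l₀ n (c l) = (n - 1) * e l₀ (c l) + (e l (c l) - 1) := by
  have hzero {k : ι} (hk : k ≠ l) : e k (c l) = 0 :=
    Finsupp.notMem_support_iff.1 fun h => Finset.disjoint_left.1 (hdisj hk) h (hc l)
  rw [witnessExponent, Finsupp.add_apply, Finsupp.smul_apply, smul_eq_mul,
    Finsupp.finsetSum_apply, Finset.sum_eq_single l (fun k _ hk => by simp [hzero hk]) (by simp)]
  simp

theorem maxPow_add_witnessExponent_le [DecidableEq ι]
    (hdisj : Pairwise (Disjoint on fun l => (e l).support)) (hc : ∀ l, c l ∈ (e l).support)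
    (l₀ : ι) (n : ℕ) {μ : σ →₀ ℕ} (hμ : ∀ l, μ (c l) = 0) (l : ι) :
    Finsupp.maxPow (e l) (μ + witnessExponent e c l₀ n) ≤ if l = l₀ then n - 1 else 0 := by
  have hpos := Nat.pos_of_ne_zero (Finsupp.mem_support_iff.1 (hc l))
  refine (Finsupp.maxPow_le_div (hc l)).trans_eq ?_
  rw [Finsupp.add_apply, hμ, zero_add, witnessExponent_apply hdisj hc]
  split_ifs with hl
  · subst hl
    rw [mul_comm, Nat.mul_add_div hpos, Nat.div_eq_of_lt (by omega), add_zero]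
  · rw [Finsupp.notMem_support_iff.1 fun h => Finset.disjoint_left.1 (hdisj (Ne.symm hl)) h (hc l),
      mul_zero, zero_add, Nat.div_eq_of_lt (by omega)]

theorem X_mul_monomial_witnessExponent_mem [CommSemiring R] (hc : ∀ l, c l ∈ (e l).support)
    (l₀ : ι) {n : ℕ} (hn : n ≠ 0) (l : ι) :
    X (c l) * monomial (witnessExponent e c l₀ n) 1 ∈ 𝓘 ^ n := by
  classical
  have hle : Finsupp.single (c l) 1 ≤ e l :=
    Finsupp.single_le_iff.2 (Nat.one_le_iff_ne_zero.2 (Finsupp.mem_support_iff.1 (hc l)))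
  have hsplit : Finsupp.single (c l) 1 + witnessExponent e c l₀ n = ((n - 1) • e l₀ + e l) +
      ∑ k ∈ Finset.univ.erase l, (e k - Finsupp.single (c k) 1) := by
    rw [witnessExponent, ← Finset.add_sum_erase _ _ (Finset.mem_univ l)]
    conv_rhs => rw [← tsub_add_cancel_of_le hle]
    ac_rfl
  have hu (k : ι) : monomial (e k) (1 : R) ∈ 𝓘 := subset_span ⟨e k, Set.mem_range_self k, rfl⟩
  have hmul (a b : σ →₀ ℕ) : monomial (a + b) (1 : R) = monomial a 1 * monomial b 1 := by
    rw [monomial_mul, mul_one]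
  have hpow (a : σ →₀ ℕ) (k : ℕ) : monomial (k • a) (1 : R) = monomial a 1 ^ k := by
    rw [monomial_pow, one_pow]
  rw [X, ← hmul, hsplit, hmul, hmul, hpow, ← pow_sub_one_mul hn]
  exact mul_mem_right _ _ (mul_mem_mul (pow_mem_pow (hu l₀) _) (hu l))

theorem colon_pow_span_monomial_witnessExponent [CommSemiring R]
    (hdisj : Pairwise (Disjoint on fun l => (e l).support)) (hc : ∀ l, c l ∈ (e l).support)
    (l₀ : ι) {n : ℕ} (hn : n ≠ 0) :
    (𝓘 ^ n).colon (span {monomial (witnessExponent e c l₀ n) (1 : R)}) =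
      span (X '' Set.range c) := by
  classical
  refine le_antisymm (fun x hx => ?_) ?_
  · rw [mem_colon_span_singleton] at hx
    by_contra hxc
    rw [mem_ideal_span_X_image] at hxc
    push Not at hxc
    obtain ⟨μ, hμ, hμc⟩ := hxc
    have hsupp : μ + witnessExponent e c l₀ n ∈
        (x * monomial (witnessExponent e c l₀ n) 1).support := by
      rwa [mem_support_iff, coeff_mul_monomial, mul_one, ← mem_support_iff]
    have hcov := (mem_pow_span_monomial_iff_maxPow (fun l h => by simpa [h] using hc l)
      hdisj).1 hx _ hsupp
    have := (Finset.sum_le_sum fun l (_ : l ∈ Finset.univ) =>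
      maxPow_add_witnessExponent_le hdisj hc l₀ n (fun l => hμc _ (Set.mem_range_self l)) l)
    rw [Finset.sum_ite_eq'] at this
    simp only [Finset.mem_univ, if_true] at this
    omega
  · rw [span_le]
    rintro _ ⟨_, ⟨l, rfl⟩, rfl⟩
    rw [SetLike.mem_coe, mem_colon_span_singleton]
    exact X_mul_monomial_witnessExponent_mem hc l₀ hn l

theorem sum_maxPow_add_single [DecidableEq ι]
    (hdisj : Pairwise (Disjoint on fun l => (e l).support)) {l : ι} {i : σ}
    (hi : i ∈ (e l).support) (m : σ →₀ ℕ) :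
    ∑ k, Finsupp.maxPow (e k) (m + Finsupp.single i 1) =
      Finsupp.maxPow (e l) (m + Finsupp.single i 1) +
        ∑ k ∈ Finset.univ.erase l, Finsupp.maxPow (e k) m := by
  rw [← Finset.add_sum_erase _ _ (Finset.mem_univ l)]
  refine congrArg _ (Finset.sum_congr rfl fun k hk => Finsupp.maxPow_add_single_of_notMem
    fun h => Finset.disjoint_left.1 (hdisj (Finset.ne_of_mem_erase hk)) h hi)

theorem sum_succ_mul_degree_le (hdisj : Pairwise (Disjoint on fun l => (e l).support))
    {i : ι → σ} (hi : ∀ l, i l ∈ (e l).support) {b : ι → ℕ} {m : σ →₀ ℕ}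
    (hb : ∀ l, (b l + 1) • e l ≤ m + Finsupp.single (i l) 1) :
    ∑ l, (b l + 1) * (e l).degree ≤ m.degree + Fintype.card ι := by
  have hsupp (l : ι) : ((b l + 1) • e l - Finsupp.single (i l) 1).support ⊆ (e l).support :=
    Finsupp.support_tsub.trans Finsupp.support_smul
  have hsub : ∑ l, ((b l + 1) • e l - Finsupp.single (i l) 1) ≤ m :=
    (Finsupp.finsetSum_le_iff_of_pairwise_disjoint (hdisj.mono fun l l' h =>
      Finset.disjoint_of_subset_left (hsupp l) (Finset.disjoint_of_subset_right (hsupp l') h))).2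
      fun l _ => tsub_le_iff_right.2 (hb l)
  have hdeg (l : ι) : ((b l + 1) • e l - Finsupp.single (i l) 1).degree + 1 =
      (b l + 1) * (e l).degree := by
    have hle : Finsupp.single (i l) 1 ≤ (b l + 1) • e l := Finsupp.single_le_iff.2 <|
      Nat.one_le_iff_ne_zero.2 (mul_ne_zero (Nat.succ_ne_zero _) (Finsupp.mem_support_iff.1 (hi l)))
    simpa using Finsupp.degree_tsub_add_degree hle
  calc ∑ l, (b l + 1) * (e l).degree
      = (∑ l, ((b l + 1) • e l - Finsupp.single (i l) 1)).degree + Fintype.card ι := by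
        simp [← hdeg, Finset.sum_add_distrib, map_sum]
    _ ≤ m.degree + Fintype.card ι := by gcongr; exact Finsupp.degree_mono hsub

theorem exists_mem_support_sum_degree_le [CommSemiring R] [Nonempty ι] (he : ∀ l, e l ≠ 0)
    (hdisj : Pairwise (Disjoint on fun l => (e l).support)) {n : ℕ} {f : MvPolynomial σ R}
    (hf : f ∉ 𝓘 ^ n) (hX : ∀ l, ∃ i ∈ (e l).support, X i * f ∈ 𝓘 ^ n)
    {α : ℕ} (hα : ∀ l, α ≤ (e l).degree) :
    ∃ m ∈ f.support, (n - 1) * α + ∑ l, (e l).degree ≤ m.degree + Fintype.card ι := by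
  classical
  simp only [mem_pow_span_monomial_iff_maxPow he hdisj, not_forall, not_le] at hf hX
  obtain ⟨m, hm, hlt⟩ := hf
  choose i hi hXi using hX
  have hcov (l : ι) : n ≤ ∑ k, Finsupp.maxPow (e k) (m + Finsupp.single (i l) 1) := by
    refine hXi l _ ?_
    rwa [mem_support_iff, add_comm, coeff_X_mul, ← mem_support_iff]
  have hsplit (l : ι) : Finsupp.maxPow (e l) m +
      ∑ k ∈ Finset.univ.erase l, Finsupp.maxPow (e k) m = ∑ k, Finsupp.maxPow (e k) m :=
    Finset.add_sum_erase _ (fun k => Finsupp.maxPow (e k) m) (Finset.mem_univ l)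
  have hb (l : ι) : (Finsupp.maxPow (e l) m + 1) • e l ≤ m + Finsupp.single (i l) 1 := by
    rw [← Finsupp.le_maxPow_iff (he l)]
    have := hcov l
    rw [sum_maxPow_add_single hdisj (hi l)] at this
    have := hsplit l
    omega
  have hsum : n - 1 ≤ ∑ l, Finsupp.maxPow (e l) m := by
    obtain ⟨l⟩ := ‹Nonempty ι›
    have := hcov l
    rw [sum_maxPow_add_single hdisj (hi l)] at this
    have := Finsupp.maxPow_add_single_le (m := m) (he l) (i l)
    have := hsplit l
    omega
  refine ⟨m, hm, le_trans ?_ (sum_succ_mul_degree_le hdisj hi hb)⟩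
  calc (n - 1) * α + ∑ l, (e l).degree
      ≤ ∑ l, (Finsupp.maxPow (e l) m * α + (e l).degree) := by
        rw [Finset.sum_add_distrib, ← Finset.sum_mul]
        gcongr
    _ ≤ ∑ l, (Finsupp.maxPow (e l) m + 1) * (e l).degree := by
        gcongr with l
        rw [add_one_mul]
        gcongr
        exact hα l

theorem sum_degree_le_of_isPrime_colon [CommSemiring R] [Nonempty ι] (he : ∀ l, e l ≠ 0)
    (hdisj : Pairwise (Disjoint on fun l => (e l).support)) {n d : ℕ} {f : MvPolynomial σ R}
    (hf : f.IsHomogeneous d) (hP : ((𝓘 ^ n).colon (span {f})).IsPrime)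
    {α : ℕ} (hα : ∀ l, α ≤ (e l).degree) :
    (n - 1) * α + ∑ l, (e l).degree ≤ d + Fintype.card ι := by
  have hfI : f ∉ 𝓘 ^ n := fun h => hP.ne_top <| by
    rwa [eq_top_iff_one, mem_colon_span_singleton, one_mul]
  have hX (l : ι) : ∃ i ∈ (e l).support, X i * f ∈ 𝓘 ^ n := by
    have hpow : monomial (n • e l) (1 : R) ∈ 𝓘 ^ n := by
      rw [show monomial (n • e l) (1 : R) = monomial (e l) 1 ^ n by rw [monomial_pow, one_pow]]
      exact pow_mem_pow (subset_span (Set.mem_image_of_mem _ (Set.mem_range_self l))) n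
    obtain ⟨i, hi, hXi⟩ := exists_X_mem_of_monomial_mem hP
      (by rw [mem_colon_span_singleton]; exact mul_mem_right f _ hpow)
    exact ⟨i, Finsupp.support_smul hi, mem_colon_span_singleton.1 hXi⟩
  obtain ⟨m, hm, hle⟩ := exists_mem_support_sum_degree_le he hdisj hfI hX hα
  have hmd : m.degree = d := by
    by_contra h
    exact mem_support_iff.1 hm (hf.coeff_eq_zero h)
  rwa [hmd] at hle

end MvPolynomial

theorem vnumber_eq_and_vnumberAt_eq {K σ : Type*} [Field K] {J P : Ideal (MvPolynomial σ K)}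
    (hP : P.IsPrime) {f : MvPolynomial σ K} {d : ℕ} (hf : f.IsHomogeneous d)
    (hfP : Submodule.colon J (span {f}) = P)
    (hmin : ∀ (d' : ℕ) (g : MvPolynomial σ K), g.IsHomogeneous d' →
      (Submodule.colon J (span {g})).IsPrime → d ≤ d') :
    vnumber J = d ∧ vnumberAt J P = d := by
  have hass : Submodule.colon J (span {f}) ∈ associatedPrimes _ (MvPolynomial σ K ⧸ J) :=
    hfP ▸ mem_associatedPrimes_of_colon_eq hP (by rwa [← colon_span])
  refine ⟨le_antisymm (Nat.sInf_le ⟨f, hf, hass⟩) (le_csInf ⟨d, f, hf, hass⟩ ?_),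
    le_antisymm (Nat.sInf_le ⟨f, hf, hfP⟩) (le_csInf ⟨d, f, hf, hfP⟩ ?_)⟩
  · rintro d' ⟨g, hg, hgP⟩
    exact hmin d' g hg hgP.isPrime
  · rintro d' ⟨g, hg, hgP⟩
    exact hmin d' g hg (hgP ▸ hP)

/-- For a complete intersection monomial ideal `I = ⟨u_1,…,u_r⟩`, for every associated prime
`P` of `I` and all `n ≥ 1`, `v(I^n) = v_P(I^n) = n·α(I) + v(I) − α(I)`, where
`v(I) = ∑ deg u_i − r` and `α(I)` is the least generator degree. -/
theorem vnumber_pow_complete_intersection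
    {K : Type*} [Field K] {σ : Type*} (r : ℕ) (hr : 0 < r) (e : Fin r → (σ →₀ ℕ))
    (he : ∀ l, e l ≠ 0)
    (hdisj : ∀ l l', l ≠ l' → Disjoint (e l).support (e l').support)
    (u : Fin r → MvPolynomial σ K) (hu : ∀ l, u l = monomial (e l) 1)
    (I : Ideal (MvPolynomial σ K)) (hI : I = Ideal.span (Set.range u))
    (P : Ideal (MvPolynomial σ K))
    (hPass : P ∈ associatedPrimes (MvPolynomial σ K) (MvPolynomial σ K ⧸ I))
    (n : ℕ) (hn : 1 ≤ n) :
    vnumber (I ^ n) = vnumberAt (I ^ n) P ∧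
    vnumber (I ^ n) =
      n * (Finset.univ.inf' ⟨⟨0, hr⟩, Finset.mem_univ _⟩ (fun l => (e l).sum fun _ k => k))
        + ((∑ l, (e l).sum fun _ k => k) - r)
        - (Finset.univ.inf' ⟨⟨0, hr⟩, Finset.mem_univ _⟩ (fun l => (e l).sum fun _ k => k)) := by
  have hdisj' : Pairwise (Disjoint on fun l => (e l).support) := fun l l' h => hdisj l l' h
  have : Nonempty (Fin r) := ⟨⟨0, hr⟩⟩
  have hIe : I = span ((monomial · (1 : K)) '' Set.range e) := by
    rw [hI, ← Set.range_comp]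
    exact congrArg (span ∘ Set.range) (funext hu)
  rw [hIe] at hPass ⊢
  obtain ⟨c, hc, rfl⟩ := exists_eq_span_X_image_of_mem_associatedPrimes hPass
  obtain ⟨l₀, -, hl₀⟩ := Finset.univ.exists_mem_eq_inf' ⟨⟨0, hr⟩, Finset.mem_univ _⟩
    fun l => (e l).degree
  have hα (l : Fin r) : (e l₀).degree ≤ (e l).degree := hl₀ ▸ Finset.inf'_le _ (Finset.mem_univ l)
  have hmin (d : ℕ) (g : MvPolynomial σ K) (hg : g.IsHomogeneous d)
      (hP : ((span ((monomial · (1 : K)) '' Set.range e) ^ n).colon (span {g})).IsPrime) :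
      (witnessExponent e c l₀ n).degree ≤ d := by
    have hg := sum_degree_le_of_isPrime_colon he hdisj' hg hP hα
    have hf := degree_witnessExponent hc l₀ n
    omega
  obtain ⟨hv, hvP⟩ := vnumber_eq_and_vnumberAt_eq (isPrime_span_X_image _)
    (isHomogeneous_monomial _ rfl)
    (colon_pow_span_monomial_witnessExponent hdisj' hc l₀ (Nat.one_le_iff_ne_zero.1 hn)) hmin
  refine ⟨hv.trans hvP.symm, ?_⟩
  rw [hv, degree_witnessExponent_eq hc l₀ (Nat.one_le_iff_ne_zero.1 hn), Fintype.card_fin, ← hl₀]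
  rfl
end

section
/- Let I be a homogeneous ideal in a polynomial ring S over a field. Then the limit as n → ∞ of α(\overline{I^n})/n equals α(I), where \overline{I^n} denotes the integral closure of I^n and α(J) is the least degree of a nonzero element of J. -/
open MvPolynomial Ideal

/-- The integral closure of an ideal. -/
noncomputable def intClosure {R : Type*} [CommRing R] (I : Ideal R) : Ideal R :=
  Ideal.span {x : R | ∃ n : ℕ, 0 < n ∧ ∃ c : ℕ → R,
    (∀ i ∈ Finset.Icc 1 n, c i ∈ I ^ i) ∧
    x ^ n + ∑ i ∈ Finset.Icc 1 n, c i * x ^ (n - i) = 0}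

/-- `α(J)`: the least degree of a nonzero homogeneous element of `J`. -/
noncomputable def alphaDeg {K : Type*} [Field K] {m : ℕ}
    (J : Ideal (MvPolynomial (Fin m) K)) : ℕ :=
  sInf {d : ℕ | ∃ f ∈ J, f ≠ 0 ∧ f.IsHomogeneous d}

section Helpers
open Finset

variable {σ : Type*} {R : Type*} [CommRing R]

/-- components of `f * g` below `a + b` vanish when those of `f` below `a`
and of `g` below `b` do. -/
lemma comp_mul_eq_zero {a b : ℕ} {f g : MvPolynomial σ R}
    (hf : ∀ e < a, homogeneousComponent e f = 0)
    (hg : ∀ e < b, homogeneousComponent e g = 0)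
    {d : ℕ} (hd : d < a + b) : homogeneousComponent d (f * g) = 0 := by
  conv_lhs => rw [← sum_homogeneousComponent f, ← sum_homogeneousComponent g]
  rw [Finset.sum_mul_sum]
  rw [map_sum]
  refine Finset.sum_eq_zero fun i hi => ?_
  rw [map_sum]
  refine Finset.sum_eq_zero fun j hj => ?_
  by_cases hia : i < a
  · rw [hf i hia, zero_mul, map_zero]
  by_cases hjb : j < b
  · rw [hg j hjb, mul_zero, map_zero]
  have hmem : homogeneousComponent i f * homogeneousComponent j g ∈
      homogeneousSubmodule σ R (i + j) :=
    (mem_homogeneousSubmodule _ _).2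
      ((homogeneousComponent_isHomogeneous i f).mul (homogeneousComponent_isHomogeneous j g))
  rw [homogeneousComponent_of_mem hmem, if_neg]
  omega

lemma comp_mul_top {a b : ℕ} {f g : MvPolynomial σ R}
    (hf : ∀ e < a, homogeneousComponent e f = 0)
    (hg : ∀ e < b, homogeneousComponent e g = 0) :
    homogeneousComponent (a + b) (f * g) =
      homogeneousComponent a f * homogeneousComponent b g := by
  by_cases ha : a ≤ f.totalDegree
  · by_cases hb : b ≤ g.totalDegree
    · conv_lhs => rw [← sum_homogeneousComponent f, ← sum_homogeneousComponent g]
      rw [Finset.sum_mul_sum, map_sum]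
      have key : ∀ i ∈ range (f.totalDegree + 1),
          (homogeneousComponent (a + b)) (∑ j ∈ range (g.totalDegree + 1),
            homogeneousComponent i f * homogeneousComponent j g) =
          if i = a then homogeneousComponent a f * homogeneousComponent b g else 0 := by
        intro i _
        rw [map_sum]
        have key2 : ∀ j ∈ range (g.totalDegree + 1),
            (homogeneousComponent (a + b)) (homogeneousComponent i f * homogeneousComponent j g)
            = if i = a ∧ j = b then homogeneousComponent a f * homogeneousComponent b g
              else 0 := by
          intro j _
          have hmem : homogeneousComponent i f * homogeneousComponent j g ∈
              homogeneousSubmodule σ R (i + j) :=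
            (mem_homogeneousSubmodule _ _).2
              ((homogeneousComponent_isHomogeneous i f).mul
                (homogeneousComponent_isHomogeneous j g))
          rw [homogeneousComponent_of_mem hmem]
          by_cases hij : i = a ∧ j = b
          · rw [if_pos, if_pos hij, hij.1, hij.2]; omega
          · rw [if_neg hij]
            by_cases h2 : a + b = i + j
            · rw [if_pos h2]
              rcases Nat.lt_or_ge i a with h | h
              · rw [hf i h, zero_mul]
              rcases Nat.lt_or_ge j b with h' | h'
              · rw [hg j h', mul_zero]
              exfalso; apply hij; omega
            · rw [if_neg h2]
        rw [Finset.sum_congr rfl key2]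
        by_cases hia : i = a
        · rw [if_pos hia]
          simp only [hia, true_and]
          rw [Finset.sum_ite_eq' (range (g.totalDegree + 1)) b
            (fun _ => homogeneousComponent a f * homogeneousComponent b g), if_pos]
          simpa using Nat.lt_succ_of_le hb
        · rw [if_neg hia]
          refine Finset.sum_eq_zero fun j _ => ?_
          rw [if_neg]; tauto
      rw [Finset.sum_congr rfl key,
        Finset.sum_ite_eq' (range (f.totalDegree + 1)) a
          (fun _ => homogeneousComponent a f * homogeneousComponent b g), if_pos]
      simpa using Nat.lt_succ_of_le ha
    · have : homogeneousComponent b g = 0 := homogeneousComponent_eq_zero _ _ (by omega)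
      rw [this, mul_zero]
      refine comp_mul_eq_zero (a := a) (b := b + 1) hf (fun e he => ?_) (by omega)
      rcases Nat.lt_or_ge e b with h | h
      · exact hg e h
      · have : e = b := by omega
        subst this; exact homogeneousComponent_eq_zero _ _ (by omega)
  · have : homogeneousComponent a f = 0 := homogeneousComponent_eq_zero _ _ (by omega)
    rw [this, zero_mul]
    refine comp_mul_eq_zero (a := a + 1) (b := b) (fun e he => ?_) hg (by omega)
    rcases Nat.lt_or_ge e a with h | h
    · exact hf e h
    · have : e = a := by omega
      subst this; exact homogeneousComponent_eq_zero _ _ (by omega)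

/-- The ideal of polynomials whose homogeneous components of degree `< a` vanish. -/
def belowIdeal (σ : Type*) (R : Type*) [CommRing R] (a : ℕ) : Ideal (MvPolynomial σ R) where
  carrier := {f | ∀ d < a, homogeneousComponent d f = 0}
  zero_mem' := fun d _ => map_zero _
  add_mem' := fun hf hg d hd => by rw [map_add, hf d hd, hg d hd, add_zero]
  smul_mem' := fun r f hf d hd => by
    have := comp_mul_eq_zero (a := 0) (b := a) (f := r) (g := f)
      (fun e he => absurd he (Nat.not_lt_zero e)) hf (d := d) (by omega)
    simpa [smul_eq_mul] using this

lemma mem_belowIdeal {a : ℕ} {f : MvPolynomial σ R} :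
    f ∈ belowIdeal σ R a ↔ ∀ d < a, homogeneousComponent d f = 0 := Iff.rfl

lemma belowIdeal_mul_mem {a b : ℕ} {f g : MvPolynomial σ R}
    (hf : f ∈ belowIdeal σ R a) (hg : g ∈ belowIdeal σ R b) :
    f * g ∈ belowIdeal σ R (a + b) :=
  fun d hd => comp_mul_eq_zero hf hg hd

lemma pow_le_belowIdeal {J : Ideal (MvPolynomial σ R)} {a : ℕ}
    (h : J ≤ belowIdeal σ R a) (k : ℕ) : J ^ k ≤ belowIdeal σ R (k * a) := by
  induction k with
  | zero => intro x _ d hd; omega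
  | succ k ih =>
      rw [pow_succ]
      refine le_trans (Ideal.mul_le.mpr fun r hr s hs => ?_) (le_refl _)
      have := belowIdeal_mul_mem (ih hr) (h hs)
      simpa [Nat.succ_mul] using this

lemma pow_mem_belowIdeal {a : ℕ} {f : MvPolynomial σ R}
    (hf : f ∈ belowIdeal σ R a) (k : ℕ) : f ^ k ∈ belowIdeal σ R (k * a) := by
  induction k with
  | zero => intro d hd; omega
  | succ k ih =>
      rw [pow_succ]
      have := belowIdeal_mul_mem ih hf
      simpa [Nat.succ_mul] using this

lemma comp_pow {t : ℕ} {f : MvPolynomial σ R}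
    (hf : ∀ e < t, homogeneousComponent e f = 0) (k : ℕ) :
    homogeneousComponent (k * t) (f ^ k) = (homogeneousComponent t f) ^ k := by
  induction k with
  | zero => simp [homogeneousComponent_of_mem ((mem_homogeneousSubmodule _ _).2
      (isHomogeneous_one σ R))]
  | succ k ih =>
      rw [pow_succ, pow_succ, ← ih]
      have := comp_mul_top (a := k * t) (b := t) (f := f ^ k) (g := f)
        (pow_mem_belowIdeal hf k) hf
      rw [← this]; ring_nf

/-- An element integral over a power-compatible family lands in `belowIdeal`. -/
lemma integral_mem_belowIdeal {R : Type*} [CommRing R] [IsDomain R]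
    {σ : Type*} {a : ℕ} {x : MvPolynomial σ R} {N : ℕ} (hN : 0 < N)
    {c : ℕ → MvPolynomial σ R}
    (hc : ∀ i ∈ Finset.Icc 1 N, c i ∈ belowIdeal σ R (i * a))
    (heq : x ^ N + ∑ i ∈ Finset.Icc 1 N, c i * x ^ (N - i) = 0) :
    x ∈ belowIdeal σ R a := by
  by_cases hx : x = 0
  · subst hx; exact fun d _ => map_zero _
  by_contra hmem
  rw [mem_belowIdeal] at hmem
  push_neg at hmem
  obtain ⟨d, hd, hdne⟩ := hmem
  set D := {e : ℕ | homogeneousComponent e x ≠ 0} with hD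
  have hDne : D.Nonempty := ⟨d, hdne⟩
  set t := sInf D with ht
  have htmem : homogeneousComponent t x ≠ 0 := Nat.sInf_mem hDne
  have hta : t < a := lt_of_le_of_lt (Nat.sInf_le hdne) hd
  have hlow : ∀ e < t, homogeneousComponent e x = 0 := by
    intro e he
    by_contra h
    have := Nat.sInf_le (show e ∈ D from h)
    omega
  have hcomp := congrArg (homogeneousComponent (N * t)) heq
  rw [map_add, map_sum, map_zero, comp_pow hlow N] at hcomp
  have hzero : ∀ i ∈ Finset.Icc 1 N,
      homogeneousComponent (N * t) (c i * x ^ (N - i)) = 0 := by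
    intro i hi
    simp only [Finset.mem_Icc] at hi
    refine comp_mul_eq_zero (a := i * a) (b := (N - i) * t) (hc i (by simp [Finset.mem_Icc]; omega))
      (pow_mem_belowIdeal hlow (N - i)) ?_
    have h1 : i * t < i * a := by nlinarith [hi.1]
    calc N * t = i * t + (N - i) * t := by
          rw [← Nat.add_mul]; congr 1; omega
      _ < i * a + (N - i) * t := by omega
  rw [Finset.sum_congr rfl hzero, Finset.sum_const_zero, add_zero] at hcomp
  exact pow_ne_zero N htmem hcomp

end Helpers

section Main

variable {K : Type*} [Field K] {m : ℕ}

lemma le_intClosure {R : Type*} [CommRing R] (J : Ideal R) : J ≤ intClosure J := by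
  intro x hx
  refine Ideal.subset_span ⟨1, one_pos, fun _ => -x, fun i hi => ?_, ?_⟩
  · simp only [Finset.mem_Icc] at hi
    have : i = 1 := by omega
    subst this; simpa using neg_mem hx
  · simp

lemma exists_comp_ne_zero {f : MvPolynomial (Fin m) K} (hf : f ≠ 0) :
    ∃ d, homogeneousComponent d f ≠ 0 := by
  by_contra h
  push_neg at h
  apply hf
  rw [← sum_homogeneousComponent f]
  exact Finset.sum_eq_zero fun i _ => h i

lemma alphaDeg_set_nonempty {I : Ideal (MvPolynomial (Fin m) K)} (hI0 : I ≠ ⊥)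
    (hIhom : ∀ f ∈ I, ∀ d : ℕ, MvPolynomial.homogeneousComponent d f ∈ I) :
    {d : ℕ | ∃ f ∈ I, f ≠ 0 ∧ f.IsHomogeneous d}.Nonempty := by
  obtain ⟨f, hfI, hf0⟩ := Submodule.exists_mem_ne_zero_of_ne_bot hI0
  obtain ⟨d, hd⟩ := exists_comp_ne_zero hf0
  exact ⟨d, homogeneousComponent d f, hIhom f hfI d, hd,
    homogeneousComponent_isHomogeneous d f⟩

lemma ideal_le_belowIdeal_alphaDeg {I : Ideal (MvPolynomial (Fin m) K)}
    (hIhom : ∀ f ∈ I, ∀ d : ℕ, MvPolynomial.homogeneousComponent d f ∈ I) :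
    I ≤ belowIdeal (Fin m) K (alphaDeg I) := by
  intro f hf d hd
  by_contra h
  have : d ∈ {d : ℕ | ∃ f ∈ I, f ≠ 0 ∧ f.IsHomogeneous d} :=
    ⟨homogeneousComponent d f, hIhom f hf d, h, homogeneousComponent_isHomogeneous d f⟩
  have h2 := Nat.sInf_le this
  rw [alphaDeg] at hd
  omega

lemma alphaDeg_intClosure_pow {I : Ideal (MvPolynomial (Fin m) K)} (hI0 : I ≠ ⊥)
    (hIhom : ∀ f ∈ I, ∀ d : ℕ, MvPolynomial.homogeneousComponent d f ∈ I) (n : ℕ) :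
    alphaDeg (intClosure (I ^ n)) = n * alphaDeg I := by
  set α := alphaDeg I with hα
  have hIle : I ≤ belowIdeal (Fin m) K α := ideal_le_belowIdeal_alphaDeg hIhom
  -- the closure sits inside `belowIdeal (n * α)`
  have hclle : intClosure (I ^ n) ≤ belowIdeal (Fin m) K (n * α) := by
    rw [intClosure, Ideal.span_le]
    rintro x ⟨N, hN, c, hc, heq⟩
    refine integral_mem_belowIdeal hN (fun i hi => ?_) heq
    have h1 : (I ^ n) ^ i = I ^ (n * i) := by rw [← pow_mul]
    have h2 : I ^ (n * i) ≤ belowIdeal (Fin m) K ((n * i) * α) := pow_le_belowIdeal hIle _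
    have h3 : (n * i) * α = i * (n * α) := by ring
    rw [h3] at h2
    exact h2 (h1 ▸ hc i hi)
  -- a nonzero homogeneous element of degree `n * α` in `I ^ n`
  obtain ⟨g, hgI, hg0, hghom⟩ := Nat.sInf_mem (alphaDeg_set_nonempty hI0 hIhom)
  have hmem : (n * α : ℕ) ∈ {d : ℕ | ∃ f ∈ intClosure (I ^ n), f ≠ 0 ∧ f.IsHomogeneous d} := by
    refine ⟨g ^ n, le_intClosure _ (Ideal.pow_mem_pow hgI n), pow_ne_zero n hg0, ?_⟩
    have := hghom.pow n
    rwa [mul_comm] at this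
  apply le_antisymm (Nat.sInf_le hmem)
  refine le_csInf ⟨_, hmem⟩ fun d hd => ?_
  obtain ⟨f, hfcl, hf0, hfd⟩ := hd
  by_contra h
  apply hf0
  have := hclle hfcl d (by omega)
  rwa [homogeneousComponent_of_mem ((mem_homogeneousSubmodule _ _).2 hfd), if_pos rfl] at this

end Main

/-- For a nonzero homogeneous ideal `I` in a polynomial ring over a field,
`lim_{n→∞} α(closure(I^n))/n = α(I)`. -/
theorem tendsto_alphaDeg_intClosure_pow_div
    {K : Type*} [Field K] {m : ℕ} (I : Ideal (MvPolynomial (Fin m) K))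
    (hI0 : I ≠ ⊥)
    (hIhom : ∀ f ∈ I, ∀ d : ℕ, MvPolynomial.homogeneousComponent d f ∈ I) :
    Filter.Tendsto (fun n : ℕ => (alphaDeg (intClosure (I ^ n)) : ℝ) / n)
      Filter.atTop (nhds (alphaDeg I)) := by
  have hev : (fun _ : ℕ => (alphaDeg I : ℝ)) =ᶠ[Filter.atTop]
      fun n : ℕ => (alphaDeg (intClosure (I ^ n)) : ℝ) / n := by
    filter_upwards [Filter.eventually_ge_atTop 1] with n hn
    rw [alphaDeg_intClosure_pow hI0 hIhom n]
    have hn0 : (n : ℝ) ≠ 0 := by positivity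
    push_cast
    field_simp
  exact Filter.Tendsto.congr' hev tendsto_const_nhds
end

section
/- Let I = ⟨x_{i_1}^{a_1},...,x_{i_r}^{a_r}⟩ be generated by pure powers of distinct variables with 2 ≤ a_1 ≤ ... ≤ a_r, and let f be a monomial with (\overline{I} : f) = ⟨x_{i_1},...,x_{i_r}⟩ and deg f = v(\overline{I}). Then there exists a minimal monomial generator g of \overline{I} such that f = g / x_{i_r}. -/
open MvPolynomial Ideal

/-!
Give `x_{i_p}` the weight `(∏ a) / a_p`, so that `x^b` has weight `(∏ a) · ∑ b_{i_p} / a_p`.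
The weighted order is a valuation and `I` lies in its ideal of order `≥ ∏ a`; a valuation ideal
contains the integral closure of each ideal it contains, while conversely a monomial of weight
`≥ ∏ a` has its `(∏ a)`-th power in `I ^ (∏ a)`. So `x^b ∈ closure(I)` iff `b` has weight
`≥ ∏ a`. The colon condition says `x^m` is below this bound and every `x^m x_{i_p}` reaches it.
If `x^m` involved a variable outside `P`, dropping it would keep the colon equal to `P` and lower
the degree below `v(closure(I))`. Hence every variable of `g = x^m x_{i_r}` is some `x_{i_p}`, whose
weight is at least that of `x_{i_r}`, so each proper divisor of `g` has weight at most that of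
`x^m`.
-/

namespace AddValuation

variable {R : Type*} [CommRing R] (v : AddValuation R ℕ∞)

def geIdeal (n : ℕ∞) : Ideal R where
  carrier := {x | n ≤ v x}
  add_mem' hx hy := (le_min hx hy).trans (v.map_add _ _)
  zero_mem' := by simp
  smul_mem' c x hx := by
    change n ≤ v (c * x)
    exact v.map_mul c x ▸ hx.trans le_add_self

variable {v}

@[simp]
lemma mem_geIdeal {n : ℕ∞} {x : R} : x ∈ v.geIdeal n ↔ n ≤ v x := Iff.rfl

lemma geIdeal_mul_le (s t : ℕ∞) : v.geIdeal s * v.geIdeal t ≤ v.geIdeal (s + t) :=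
  Ideal.mul_le.2 fun x hx y hy => by
    rw [mem_geIdeal, v.map_mul]
    exact add_le_add hx hy

lemma pow_le_geIdeal {I : Ideal R} {n : ℕ∞} (h : I ≤ v.geIdeal n) (t : ℕ) :
    I ^ t ≤ v.geIdeal (t • n) := by
  induction t with
  | zero =>
    rw [pow_zero, zero_nsmul, Ideal.one_eq_top]
    exact fun x _ => by simp
  | succ t ih =>
    rw [pow_succ, succ_nsmul]
    exact (Ideal.mul_mono ih h).trans (geIdeal_mul_le _ _)

lemma isPrime_geIdeal_one : (v.geIdeal 1).IsPrime := by
  refine Ideal.isPrime_iff.2 ⟨fun h => ?_, fun {x y} hxy => ?_⟩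
  · have := (Ideal.eq_top_iff_one _).1 h
    simp at this
  · simp only [mem_geIdeal, v.map_mul, Order.one_le_iff_ne_zero] at hxy ⊢
    by_contra! h
    simp [h.1, h.2] at hxy

lemma intClosure_le_geIdeal {I : Ideal R} {n : ℕ} (h : I ≤ v.geIdeal n) :
    intClosure I ≤ v.geIdeal n := by
  rw [intClosure, Ideal.span_le]
  rintro x ⟨N, -, c, hc, heq⟩
  by_contra hx
  obtain ⟨k, hk⟩ : ∃ k : ℕ, v x = k :=
    ENat.ne_top_iff_exists.1 (ne_top_of_lt (not_le.1 hx)) |>.imp fun _ h => h.symm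
  have hkn : k < n := by simpa [hk] using hx
  -- every term `c t * x ^ (N - t)` has order `≥ t * n + (N - t) * k > N * k = v (x ^ N)`
  have hsum : ((N * k + 1 : ℕ) : ℕ∞) ≤ v (∑ t ∈ Finset.Icc 1 N, c t * x ^ (N - t)) := by
    refine v.map_le_sum fun t ht => ?_
    obtain ⟨ht1, htN⟩ := Finset.mem_Icc.1 ht
    have hct : ((t * n : ℕ) : ℕ∞) ≤ v (c t) := by
      simpa [nsmul_eq_mul] using pow_le_geIdeal h t (hc t ht)
    have hsplit : N * k = t * k + (N - t) * k := by
      rw [← add_mul, Nat.add_sub_cancel' htN]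
    have : t * k + 1 ≤ t * n := by nlinarith
    rw [v.map_mul, v.map_pow, hk]
    calc ((N * k + 1 : ℕ) : ℕ∞) ≤ ((t * n + (N - t) * k : ℕ) : ℕ∞) := Nat.cast_le.2 (by omega)
      _ ≤ v (c t) + (N - t) • (k : ℕ∞) := by
        rw [Nat.cast_add, nsmul_eq_mul, ← Nat.cast_mul]
        exact add_le_add hct le_rfl
  have hxN : v (x ^ N) = v (∑ t ∈ Finset.Icc 1 N, c t * x ^ (N - t)) := by
    rw [eq_neg_of_add_eq_zero_left heq, v.map_neg]
  rw [← hxN, v.map_pow, hk, nsmul_eq_mul, ← Nat.cast_mul, Nat.cast_le] at hsum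
  omega

end AddValuation

lemma mem_intClosure_of_pow_mem_pow {R : Type*} [CommRing R] {I : Ideal R} {x : R} {n : ℕ}
    (hn : 0 < n) (h : x ^ n ∈ I ^ n) : x ∈ intClosure I := by
  classical
  refine Ideal.subset_span ⟨n, hn, fun t => if t = n then -x ^ n else 0, fun t _ => ?_, ?_⟩
  · dsimp only
    split_ifs with ht
    · subst ht
      exact neg_mem h
    · exact zero_mem _
  · simp [ite_mul, Finset.sum_ite_eq', Nat.one_le_of_lt hn]

namespace MvPolynomial

variable {σ R : Type*} [CommRing R] [IsDomain R]

noncomputable def weightedOrderValuation (w : σ → ℕ) :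
    AddValuation (MvPolynomial σ R) ℕ∞ :=
  AddValuation.of (fun f => (f : MvPowerSeries σ R).weightedOrder w)
    (by simp) (by simp [MvPowerSeries.weightedOrder_one])
    (fun f g => by simpa using MvPowerSeries.min_weightedOrder_le_add w)
    (fun f g => by simpa using MvPowerSeries.weightedOrder_mul w (f : MvPowerSeries σ R) g)

lemma weightedOrderValuation_apply (w : σ → ℕ) (f : MvPolynomial σ R) :
    weightedOrderValuation w f = (f : MvPowerSeries σ R).weightedOrder w :=
  rfl

lemma monomial_mem_geIdeal_iff {w : σ → ℕ} {b : σ →₀ ℕ} {n : ℕ} :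
    monomial b (1 : R) ∈ (weightedOrderValuation w).geIdeal n ↔ n ≤ Finsupp.weight w b := by
  rw [AddValuation.mem_geIdeal, weightedOrderValuation_apply, coe_monomial,
    MvPowerSeries.weightedOrder_monomial_of_ne_zero (w := w) (one_ne_zero (α := R)), Nat.cast_le]

lemma span_X_image_eq_geIdeal (s : Set σ) :
    Ideal.span (X '' s) =
      (weightedOrderValuation (R := R) (s.indicator fun _ => 1)).geIdeal 1 := by
  refine le_antisymm (Ideal.span_le.2 ?_) fun f hf => mem_ideal_span_X_image.2 fun b hb => ?_
  · rintro _ ⟨j, hj, rfl⟩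
    rw [SetLike.mem_coe, X]
    exact (monomial_mem_geIdeal_iff (n := 1)).2 (by simp [Finsupp.weight_single, hj])
  · by_contra! hbs
    have hle : (f : MvPowerSeries σ R).weightedOrder (s.indicator fun _ => 1) ≤
        ((Finsupp.weight (s.indicator fun _ => 1) b : ℕ) : ℕ∞) :=
      MvPowerSeries.weightedOrder_le _ (by rwa [coeff_coe, ← mem_support_iff])
    have h0 : Finsupp.weight (s.indicator fun _ => 1) b = 0 := by
      rw [Finsupp.weight_apply]
      refine Finset.sum_eq_zero fun j _ => ?_
      by_cases hj : j ∈ s <;> simp [hj, hbs]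
    rw [AddValuation.mem_geIdeal, weightedOrderValuation_apply] at hf
    simp [h0] at hle
    simp [hle] at hf

lemma isPrime_span_range_X {ι : Type*} (i : ι → σ) :
    (Ideal.span (Set.range fun p => X (i p)) : Ideal (MvPolynomial σ R)).IsPrime := by
  rw [Set.range_comp', span_X_image_eq_geIdeal]
  exact AddValuation.isPrime_geIdeal_one

end MvPolynomial

section PurePowers

variable {σ ι R : Type*} [Fintype ι] [CommRing R]

variable (R) in
noncomputable def purePowerIdeal (i : ι → σ) (a : ι → ℕ) : Ideal (MvPolynomial σ R) :=
  Ideal.span (Set.range fun p => X (i p) ^ a p)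

noncomputable def purePowerWeight (i : ι → σ) (a : ι → ℕ) : σ → ℕ :=
  Function.extend i (fun p => (∏ q, a q) / a p) 0

variable {i : ι → σ} {a : ι → ℕ}

lemma purePowerWeight_apply (hi : Function.Injective i) (p : ι) :
    purePowerWeight i a (i p) = (∏ q, a q) / a p :=
  hi.extend_apply _ _ _

lemma purePowerWeight_of_notMem_range {j : σ} (hj : j ∉ Set.range i) :
    purePowerWeight i a j = 0 :=
  Function.extend_apply' _ _ _ fun ⟨p, hp⟩ => hj ⟨p, hp⟩

lemma mul_purePowerWeight_apply (hi : Function.Injective i) (p : ι) :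
    a p * purePowerWeight i a (i p) = ∏ q, a q := by
  rw [purePowerWeight_apply hi,
    Nat.mul_div_cancel' (Finset.dvd_prod_of_mem a (Finset.mem_univ p))]

lemma X_pow_pow_prod_mem_pow (hi : Function.Injective i) (j : σ) (e : ℕ) :
    (X j ^ e) ^ (∏ p, a p) ∈ purePowerIdeal R i a ^ (e * purePowerWeight i a j) := by
  by_cases hj : j ∈ Set.range i
  · obtain ⟨p, rfl⟩ := hj
    have : (X (i p) ^ e) ^ (∏ q, a q) =
        ((X (i p) : MvPolynomial σ R) ^ a p) ^ (e * purePowerWeight i a (i p)) := by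
      rw [← pow_mul, ← pow_mul, ← mul_purePowerWeight_apply hi p]
      ring
    rw [this]
    exact Ideal.pow_mem_pow (Ideal.subset_span (Set.mem_range_self p)) _
  · simp [purePowerWeight_of_notMem_range hj]

lemma monomial_pow_prod_mem_pow_weight (hi : Function.Injective i) (b : σ →₀ ℕ) :
    monomial b (1 : R) ^ (∏ p, a p) ∈
      purePowerIdeal R i a ^ Finsupp.weight (purePowerWeight i a) b := by
  rw [monomial_eq, C_1, one_mul, Finsupp.prod, ← Finset.prod_pow, Finsupp.weight_apply,
    Finsupp.sum, ← Finset.prod_pow_eq_pow_sum]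
  exact Ideal.prod_mem_prod fun j _ => by simpa using X_pow_pow_prod_mem_pow hi j (b j)

variable [IsDomain R]

lemma purePowerIdeal_le_geIdeal (hi : Function.Injective i) :
    purePowerIdeal R i a ≤
      (weightedOrderValuation (R := R) (purePowerWeight i a)).geIdeal (∏ p, a p : ℕ) := by
  rw [purePowerIdeal, Ideal.span_le]
  rintro _ ⟨p, rfl⟩
  dsimp only
  rw [SetLike.mem_coe, X_pow_eq_monomial, monomial_mem_geIdeal_iff, Finsupp.weight_single,
    smul_eq_mul, mul_purePowerWeight_apply hi]

lemma monomial_mem_intClosure_iff (hi : Function.Injective i) (ha : ∀ p, 0 < a p)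
    {b : σ →₀ ℕ} :
    monomial b (1 : R) ∈ intClosure (purePowerIdeal R i a) ↔
      ∏ p, a p ≤ Finsupp.weight (purePowerWeight i a) b := by
  refine ⟨fun h => monomial_mem_geIdeal_iff.1
      (AddValuation.intClosure_le_geIdeal (purePowerIdeal_le_geIdeal hi) h),
    fun h => mem_intClosure_of_pow_mem_pow (n := ∏ p, a p) (Finset.prod_pos fun p _ => ha p) ?_⟩
  exact Ideal.pow_le_pow_right h (monomial_pow_prod_mem_pow_weight hi b)

end PurePowers

lemma colon_mem_associatedPrimes {R : Type*} [CommRing R] {J : Ideal R} {f : R}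
    (hP : (Submodule.colon J (Ideal.span {f})).IsPrime) :
    Submodule.colon J (Ideal.span {f}) ∈ associatedPrimes R (R ⧸ J) := by
  refine ⟨hP, Ideal.Quotient.mk J f, ?_⟩
  suffices Submodule.colon (⊥ : Submodule R (R ⧸ J)) {Ideal.Quotient.mk J f} =
      Submodule.colon J (Ideal.span {f}) by
    rw [this, hP.radical]
  ext g
  rw [Submodule.mem_colon_singleton, Submodule.mem_bot, Ideal.mem_colon_span_singleton,
    Algebra.smul_def, Ideal.Quotient.algebraMap_eq, ← map_mul, Ideal.Quotient.eq_zero_iff_mem]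

lemma vnumber_le_of_isPrime_colon {K σ : Type*} [Field K] {J : Ideal (MvPolynomial σ K)}
    {f : MvPolynomial σ K} {d : ℕ} (hf : f.IsHomogeneous d)
    (hP : (Submodule.colon J (Ideal.span {f})).IsPrime) :
    vnumber J ≤ d :=
  Nat.sInf_le ⟨f, hf, colon_mem_associatedPrimes hP⟩

lemma monomial_add_single_mem_of_X_mem_colon {σ R : Type*} [CommRing R]
    {J : Ideal (MvPolynomial σ R)} {m : σ →₀ ℕ} {j : σ}
    (h : X j ∈ Submodule.colon J (Ideal.span {monomial m (1 : R)})) :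
    monomial (m + Finsupp.single j 1) 1 ∈ J := by
  rw [monomial_add_single, pow_one, mul_comm]
  exact Ideal.mem_colon_span_singleton.1 h

lemma weight_le_of_lt_add_single {σ : Type*} {w : σ → ℕ} {m c : σ →₀ ℕ} {j₀ : σ}
    (hw : ∀ j, (m + Finsupp.single j₀ 1 : σ →₀ ℕ) j ≠ 0 → w j₀ ≤ w j)
    (hc : c < m + Finsupp.single j₀ 1) :
    Finsupp.weight w c ≤ Finsupp.weight w m := by
  classical
  obtain ⟨j, hj⟩ : ∃ j, c j < (m + Finsupp.single j₀ 1 : σ →₀ ℕ) j := by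
    by_contra! h
    exact hc.not_ge fun j => h j
  set d := m + Finsupp.single j₀ 1 - Finsupp.single j 1
  have hcd : c ≤ d := fun x => by
    rw [Finsupp.tsub_apply, Finsupp.single_apply]
    split_ifs with hx
    · subst hx; omega
    · simpa using hc.le x
  have hd : Finsupp.weight w d + w j = Finsupp.weight w m + w j₀ := by
    rw [Finsupp.weight_sub_single_add (by omega), map_add, Finsupp.weight_single, one_smul]
  obtain ⟨e, he⟩ := le_iff_exists_add.1 hcd
  have := hw j (by omega)
  rw [he, map_add] at hd
  omega

section ColonByMonomial

variable {K σ ι : Type*} [Field K] [Fintype ι] {i : ι → σ} {a : ι → ℕ} {m : σ →₀ ℕ}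

lemma prod_le_weight_add_single_of_colon_eq (hi : Function.Injective i) (ha : ∀ p, 0 < a p)
    (hcolon : Submodule.colon (intClosure (purePowerIdeal K i a))
      (Ideal.span {monomial m (1 : K)}) = Ideal.span (Set.range fun p => X (i p)))
    (p : ι) :
    ∏ q, a q ≤ Finsupp.weight (purePowerWeight i a) (m + Finsupp.single (i p) 1) :=
  (monomial_mem_intClosure_iff hi ha).1
    (monomial_add_single_mem_of_X_mem_colon
      (hcolon ▸ Ideal.subset_span (Set.mem_range_self p)))

lemma weight_lt_prod_of_colon_eq (hi : Function.Injective i) (ha : ∀ p, 0 < a p)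
    (hcolon : Submodule.colon (intClosure (purePowerIdeal K i a))
      (Ideal.span {monomial m (1 : K)}) = Ideal.span (Set.range fun p => X (i p))) :
    Finsupp.weight (purePowerWeight i a) m < ∏ q, a q := by
  rw [← not_le, ← monomial_mem_intClosure_iff (R := K) hi ha]
  intro hm
  apply (isPrime_span_range_X (R := K) i).ne_top
  rw [← hcolon, Submodule.colon_eq_top_iff_subset]
  exact Ideal.span_le.2 (Set.singleton_subset_iff.2 hm)

lemma eq_zero_of_notMem_range_of_colon_eq (hi : Function.Injective i) (ha : ∀ p, 0 < a p)
    (hcolon : Submodule.colon (intClosure (purePowerIdeal K i a))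
      (Ideal.span {monomial m (1 : K)}) = Ideal.span (Set.range fun p => X (i p)))
    (hdeg : m.degree = vnumber (intClosure (purePowerIdeal K i a)))
    {j : σ} (hj : j ∉ Set.range i) :
    m j = 0 := by
  by_contra hmj
  set m' := m - Finsupp.single j 1
  have hm' : m' + Finsupp.single j 1 = m := Finsupp.sub_add_single_one_cancel hmj
  have hw : Finsupp.weight (purePowerWeight i a) m' = Finsupp.weight (purePowerWeight i a) m := by
    simpa [purePowerWeight_of_notMem_range hj] using
      Finsupp.weight_sub_single_add (w := purePowerWeight i a) hmj
  have hcolon' : Submodule.colon (intClosure (purePowerIdeal K i a))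
      (Ideal.span {monomial m' (1 : K)}) = Ideal.span (Set.range fun p => X (i p)) := by
    refine le_antisymm ?_ (Ideal.span_le.2 ?_)
    · rw [← hcolon]
      refine Submodule.colon_mono le_rfl
        (SetLike.coe_subset_coe.2 (Ideal.span_singleton_le_span_singleton.2 ⟨X j ^ 1, ?_⟩))
      rw [← monomial_add_single, hm']
    · rintro _ ⟨p, rfl⟩
      dsimp only
      rw [SetLike.mem_coe, Ideal.mem_colon_span_singleton, ← pow_one (X (i p)), mul_comm,
        ← monomial_add_single, monomial_mem_intClosure_iff hi ha, map_add, hw, ← map_add]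
      exact prod_le_weight_add_single_of_colon_eq hi ha hcolon p
  have hv := vnumber_le_of_isPrime_colon (isHomogeneous_monomial (1 : K) rfl)
    (hcolon' ▸ isPrime_span_range_X i)
  have hdeg' : m'.degree + 1 = m.degree := by
    rw [← hm', map_add, Finsupp.degree_single]
  omega

lemma purePowerWeight_le_of_ne_zero (hi : Function.Injective i) (ha : ∀ p, 0 < a p) {r : ι}
    (hr : ∀ p, a p ≤ a r) (hm : ∀ j ∉ Set.range i, m j = 0) (j : σ)
    (hj : (m + Finsupp.single (i r) 1 : σ →₀ ℕ) j ≠ 0) :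
    purePowerWeight i a (i r) ≤ purePowerWeight i a j := by
  by_cases hji : j ∈ Set.range i
  · obtain ⟨p, rfl⟩ := hji
    rw [purePowerWeight_apply hi, purePowerWeight_apply hi]
    exact Nat.div_le_div_left (hr p) (ha p)
  · have hrj : i r ≠ j := fun h => hji ⟨r, h⟩
    simp [hm j hji, Finsupp.single_eq_of_ne' hrj] at hj

end ColonByMonomial

/-- If `I = ⟨x_{i_1}^{a_1},…,x_{i_r}^{a_r}⟩` with `2 ≤ a_1 ≤ ⋯ ≤ a_r` (here `r = k+1`) and
`f = x^m` is a monomial with `(closure(I) : f) = ⟨x_{i_1},…,x_{i_r}⟩` and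
`deg f = v(closure(I))`, then `f = g / x_{i_r}` for some minimal monomial generator `g`
of `closure(I)`. -/
theorem eq_minGen_div_last_var
    {K : Type*} [Field K] {σ : Type*} (k : ℕ) (i : Fin (k + 1) → σ)
    (hi : Function.Injective i)
    (a : Fin (k + 1) → ℕ) (ha2 : 2 ≤ a 0) (hmono : Monotone a)
    (I : Ideal (MvPolynomial σ K))
    (hI : I = Ideal.span (Set.range fun p => (X (i p) : MvPolynomial σ K) ^ a p))
    (P : Ideal (MvPolynomial σ K))
    (hP : P = Ideal.span (Set.range fun p => (X (i p) : MvPolynomial σ K)))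
    (m : σ →₀ ℕ)
    (hcolon : Submodule.colon (intClosure I)
        (Ideal.span {(monomial m 1 : MvPolynomial σ K)}) = P)
    (hdeg : (m.sum fun _ e => e) = vnumber (intClosure I)) :
    ∃ c : σ →₀ ℕ,
      ((monomial c 1 : MvPolynomial σ K) ∈ intClosure I ∧
        ∀ c' : σ →₀ ℕ, c' ≤ c → c' ≠ c →
          (monomial c' 1 : MvPolynomial σ K) ∉ intClosure I) ∧
      c = m + Finsupp.single (i (Fin.last k)) 1 := by
  obtain rfl : I = purePowerIdeal K i a := hI
  subst hP
  have ha : ∀ p, 0 < a p := fun p => by have := hmono (Fin.zero_le p); omega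
  have hsupp : ∀ j ∉ Set.range i, m j = 0 := fun j hj =>
    eq_zero_of_notMem_range_of_colon_eq hi ha hcolon hdeg hj
  refine ⟨_, ⟨(monomial_mem_intClosure_iff hi ha).2
    (prod_le_weight_add_single_of_colon_eq hi ha hcolon _), fun c hle hne hc => ?_⟩, rfl⟩
  rw [monomial_mem_intClosure_iff hi ha] at hc
  have hm := weight_lt_prod_of_colon_eq hi ha hcolon
  have hc' := weight_le_of_lt_add_single
    (purePowerWeight_le_of_ne_zero hi ha (fun p => hmono (Fin.le_last p)) hsupp)
    (lt_of_le_of_ne hle hne)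
  omega
end

section
/- Let I = ⟨x_{i_1}^{a_1},...,x_{i_k}^{a_k}⟩ with 1 ≤ a_1 ≤ ... ≤ a_k and k ≥ 2, in a polynomial ring S over a field. Then for all n ≥ 1: n·a_1 + ⌈a_2/a_1 − a_2/a_k⌉ − 1 ≤ v(\overline{I^n}) ≤ n·a_1 + ⌈a_k/a_1⌉ − 2. -/
/-!
Give the variable `x_{i_l}` the weight `L / a_l`, where `L = ∏ a_l`, and every other variable
weight `0`. The weighted order is then a valuation, and the integral closure of `I ^ n` is the
monomial ideal `J` of polynomials of weighted order at least `n * L`: valuation ideals are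
integrally closed, and the `L`-th power of a monomial of weight at least `n * L` lies in
`I ^ (n * L)`. The colon of `J` by a monomial `x ^ b` is again such an ideal, now with threshold
`n * L - w(b)`, and it is the prime `⟨x_{i_1}, …, x_{i_k}⟩` as soon as `0 < n * L - w(b) ≤ L / a_k`.
The monomial `x_{i_1}^{n a_1 - 1} x_{i_k}^{⌈a_k / a_1⌉ - 1}` has this property, giving the upper
bound. Conversely, if `f` is homogeneous of degree `d` and `J : f` is prime, this prime contains
`x_{i_k}`, so `f` has a monomial `μ` with `w(μ) < n * L ≤ w(μ) + L / a_k`. Bounding `w(μ)` by the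
`x_{i_1}`-exponent of `μ` and its degree `d`, every other variable weighing at most `L / a_2`,
gives the lower bound.
-/

open MvPolynomial Ideal

namespace Finsupp

variable {σ : Type*}

theorem apply_mul_le_weight (ω : σ → ℕ) (μ : σ →₀ ℕ) (j : σ) : μ j * ω j ≤ weight ω μ := by
  have h := congrArg (weight ω) (single_add_erase j μ)
  rw [map_add, weight_single, smul_eq_mul] at h
  omega

theorem weight_add_mul_le {ω : σ → ℕ} {j₀ : σ} {m : ℕ} (h : ∀ j ≠ j₀, ω j ≤ m) (μ : σ →₀ ℕ) :
    weight ω μ + μ j₀ * m ≤ μ j₀ * ω j₀ + degree μ * m := by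
  set ν := μ.erase j₀
  have hν : weight ω ν ≤ degree ν * m := by
    rw [weight_apply, Finsupp.sum, degree_apply, Finset.sum_mul]
    refine Finset.sum_le_sum fun j hj => Nat.mul_le_mul_left _ (h j ?_)
    rintro rfl
    simp [ν] at hj
  have hw := congrArg (weight ω) (single_add_erase j₀ μ)
  have hd := congrArg degree (single_add_erase j₀ μ)
  rw [map_add, weight_single, smul_eq_mul] at hw
  rw [map_add, degree_single] at hd
  nlinarith

end Finsupp

theorem MvPowerSeries.weightedOrder_pow {σ R : Type*} [Semiring R] [NoZeroDivisors R]
    [Nontrivial R] (w : σ → ℕ) (f : MvPowerSeries σ R) (k : ℕ) :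
    (f ^ k).weightedOrder w = k • f.weightedOrder w := by
  induction k with
  | zero => simp
  | succ k ih => rw [pow_succ, weightedOrder_mul, ih, succ_nsmul]

section WeightIdeal

variable {σ R : Type*} [CommSemiring R] (ω : σ → ℕ)

-- Stated through `MvPowerSeries.weightedOrder`, whose additivity over a domain
-- (`MvPowerSeries.weightedOrder_mul`) is what makes this ideal integrally closed.
def weightIdeal (t : ℕ) : Ideal (MvPolynomial σ R) where
  carrier := {p | (t : ℕ∞) ≤ (p : MvPowerSeries σ R).weightedOrder ω}
  add_mem' {p q} hp hq := by
    rw [Set.mem_ofPred_eq, coe_add]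
    exact (le_min hp hq).trans (MvPowerSeries.min_weightedOrder_le_add ω)
  zero_mem' := by simp
  smul_mem' r p hp := by
    rw [Set.mem_ofPred_eq, smul_eq_mul, coe_mul]
    exact hp.trans (le_add_self.trans (MvPowerSeries.le_weightedOrder_mul ω))

variable {ω}

theorem mem_weightIdeal {t : ℕ} {p : MvPolynomial σ R} :
    p ∈ weightIdeal ω t ↔ (t : ℕ∞) ≤ (p : MvPowerSeries σ R).weightedOrder ω :=
  Iff.rfl

theorem mem_weightIdeal_iff_support {t : ℕ} {p : MvPolynomial σ R} :
    p ∈ weightIdeal ω t ↔ ∀ μ ∈ p.support, t ≤ Finsupp.weight ω μ := by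
  rw [mem_weightIdeal]
  constructor
  · intro hp μ hμ
    have := hp.trans (MvPowerSeries.weightedOrder_le ω (d := μ) (by simpa using hμ))
    exact_mod_cast this
  · intro hp
    refine MvPowerSeries.le_weightedOrder ω fun μ hμ => ?_
    rw [coeff_coe, ← notMem_support_iff]
    exact fun h => (hp μ h).not_gt (by exact_mod_cast hμ)

theorem monomial_mem_weightIdeal {t : ℕ} {μ : σ →₀ ℕ} (h : t ≤ Finsupp.weight ω μ) (c : R) :
    monomial μ c ∈ weightIdeal ω t :=
  mem_weightIdeal_iff_support.2 fun _ hν =>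
    Finset.mem_singleton.1 (support_monomial_subset hν) ▸ h

theorem weightIdeal_anti : Antitone (weightIdeal (R := R) ω) :=
  fun _ _ hst _ hp => mem_weightIdeal.2 <| (Nat.cast_le.2 hst).trans hp

theorem mul_weightIdeal_le (s t : ℕ) :
    weightIdeal (R := R) ω s * weightIdeal ω t ≤ weightIdeal ω (s + t) :=
  Ideal.mul_le.2 fun p hp q hq => by
    rw [mem_weightIdeal, coe_mul, Nat.cast_add]
    exact (add_le_add hp hq).trans (MvPowerSeries.le_weightedOrder_mul ω)

theorem pow_weightIdeal_le (t k : ℕ) : weightIdeal (R := R) ω t ^ k ≤ weightIdeal ω (k * t) := by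
  induction k with
  | zero => intro p _; simp [mem_weightIdeal]
  | succ k ih =>
    rw [pow_succ, add_one_mul]
    exact (Ideal.mul_mono_left ih).trans (mul_weightIdeal_le _ _)

theorem weightIdeal_eq_weightIdeal_one {t : ℕ} (ht : 0 < t) (hω : ∀ j, ω j ≠ 0 → t ≤ ω j) :
    weightIdeal (R := R) ω t = weightIdeal ω 1 := by
  refine le_antisymm (weightIdeal_anti ht) fun p hp => ?_
  rw [mem_weightIdeal_iff_support] at hp ⊢
  intro μ hμ
  obtain ⟨j, -, hj⟩ := Finset.exists_ne_zero_of_sum_ne_zero (s := μ.support)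
    (f := fun j => μ j • ω j) (Nat.one_le_iff_ne_zero.1 (hp μ hμ))
  calc t ≤ ω j := hω j (right_ne_zero_of_mul hj)
    _ ≤ μ j * ω j := Nat.le_mul_of_pos_left _ (Nat.pos_of_ne_zero (left_ne_zero_of_mul hj))
    _ ≤ Finsupp.weight ω μ := Finsupp.apply_mul_le_weight ω μ j

section NoZeroDivisors

variable [NoZeroDivisors R] [Nontrivial R]

theorem mul_monomial_mem_weightIdeal_iff {t : ℕ} {p : MvPolynomial σ R} {b : σ →₀ ℕ} :
    p * monomial b 1 ∈ weightIdeal ω t ↔ p ∈ weightIdeal ω (t - Finsupp.weight ω b) := by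
  rw [mem_weightIdeal, mem_weightIdeal, coe_mul, coe_monomial, MvPowerSeries.weightedOrder_mul,
    MvPowerSeries.weightedOrder_monomial_of_ne_zero ω one_ne_zero, ENat.natCast_sub,
    tsub_le_iff_right]

theorem colon_weightIdeal_span_monomial (t : ℕ) (b : σ →₀ ℕ) :
    Submodule.colon (weightIdeal (R := R) ω t) (Ideal.span {monomial b (1 : R)}) =
      weightIdeal ω (t - Finsupp.weight ω b) := by
  ext p
  rw [Ideal.mem_colon_span_singleton, mul_monomial_mem_weightIdeal_iff]

theorem isPrime_weightIdeal_one : (weightIdeal (R := R) ω 1).IsPrime := by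
  refine ⟨fun h => ?_, fun {p q} hpq => ?_⟩
  · have h1 : (1 : MvPolynomial σ R) ∈ weightIdeal ω 1 := h ▸ Submodule.mem_top
    rw [mem_weightIdeal, coe_one, MvPowerSeries.weightedOrder_one] at h1
    exact absurd h1 (by norm_num)
  · simp only [mem_weightIdeal, coe_mul, MvPowerSeries.weightedOrder_mul, Nat.cast_one,
      Order.one_le_iff_ne_zero] at hpq ⊢
    exact not_and_or.1 (mt add_eq_zero.2 hpq)

end NoZeroDivisors

end WeightIdeal

theorem mem_intClosure_of_pow_mem_pow_s11 {R : Type*} [CommRing R] {J : Ideal R} {x : R} {N : ℕ}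
    (hN : 0 < N) (hx : x ^ N ∈ J ^ N) : x ∈ intClosure J := by
  refine Ideal.subset_span ⟨N, hN, fun j => if j = N then -x ^ N else 0, fun j _ => ?_, ?_⟩
  · dsimp only
    split_ifs with hj
    · subst hj
      exact neg_mem hx
    · exact zero_mem _
  · simp only [ite_mul, zero_mul, Finset.sum_ite_eq', Finset.mem_Icc, le_refl, and_true,
      Nat.one_le_iff_ne_zero.2 hN.ne', if_true, Nat.sub_self, pow_zero, mul_one, add_neg_cancel]

section MonomialIdeal

variable {σ R ι : Type*} [CommRing R] {ω : σ → ℕ}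

theorem intClosure_le_weightIdeal [IsDomain R] {J : Ideal (MvPolynomial σ R)} {t : ℕ}
    (hJ : J ≤ weightIdeal ω t) : intClosure J ≤ weightIdeal ω t := by
  rw [intClosure, Ideal.span_le]
  rintro x ⟨N, hN, c, hc, hx⟩
  by_contra hxt
  -- If `x` has weighted order `v < t`, each `c j * x ^ (N - j)` has order `> N * v`, the order
  -- of `x ^ N`.
  obtain ⟨v, hv⟩ : ∃ v : ℕ, (v : ℕ∞) = (x : MvPowerSeries σ R).weightedOrder ω :=
    ENat.ne_top_iff_exists.1 (ne_top_of_lt (not_le.1 hxt))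
  have hvt : v < t := by
    rw [SetLike.mem_coe, mem_weightIdeal, ← hv] at hxt
    exact_mod_cast not_le.1 hxt
  have hxv : x ∈ weightIdeal ω v := mem_weightIdeal.2 hv.le
  have hterm : ∀ j ∈ Finset.Icc 1 N, c j * x ^ (N - j) ∈ weightIdeal ω (N * v + 1) := by
    intro j hj
    obtain ⟨hj1, hjN⟩ := Finset.mem_Icc.1 hj
    have hcj : c j ∈ weightIdeal ω (j * t) :=
      pow_weightIdeal_le t j (Ideal.pow_right_mono hJ j (hc j hj))
    have hxj : x ^ (N - j) ∈ weightIdeal ω ((N - j) * v) :=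
      pow_weightIdeal_le v _ (Ideal.pow_mem_pow hxv _)
    refine weightIdeal_anti ?_ (mul_weightIdeal_le _ _ (Ideal.mul_mem_mul hcj hxj))
    obtain ⟨r, rfl⟩ := Nat.exists_eq_add_of_le hjN
    rw [Nat.add_sub_cancel_left]
    nlinarith
  have hxN : x ^ N ∈ weightIdeal ω (N * v + 1) := by
    rw [eq_neg_of_add_eq_zero_left hx]
    exact neg_mem (Ideal.sum_mem _ hterm)
  rw [mem_weightIdeal, coe_pow, MvPowerSeries.weightedOrder_pow, ← hv] at hxN
  rw [nsmul_eq_mul, ← Nat.cast_mul, Nat.cast_le] at hxN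
  omega

theorem monomial_one_pow_mem_pow_weight {I : Ideal (MvPolynomial σ R)} {L : ℕ}
    (h : ∀ j, X j ^ L ∈ I ^ ω j) (μ : σ →₀ ℕ) :
    monomial μ (1 : R) ^ L ∈ I ^ Finsupp.weight ω μ := by
  induction μ using Finsupp.induction with
  | zero => simp
  | single_add j c ν _ _ ih =>
    rw [← mul_one (1 : R), ← monomial_mul, ← X_pow_eq_monomial, mul_pow, ← pow_mul, mul_comm c,
      pow_mul, map_add, Finsupp.weight_single, smul_eq_mul, pow_add, mul_comm c, pow_mul]
    exact Ideal.mul_mem_mul (Ideal.pow_mem_pow (h j) c) ih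

theorem intClosure_pow_eq_weightIdeal [IsDomain R] {i : ι → σ} {a : ι → ℕ} {L : ℕ} (hL : 0 < L)
    (ha : ∀ l, a l * ω (i l) = L) (hω : ∀ j ∉ Set.range i, ω j = 0) (n : ℕ) :
    intClosure (Ideal.span (Set.range fun l => (X (i l) : MvPolynomial σ R) ^ a l) ^ n) =
      weightIdeal ω (n * L) := by
  set I := Ideal.span (Set.range fun l => (X (i l) : MvPolynomial σ R) ^ a l)
  apply le_antisymm
  · have hI : I ≤ weightIdeal ω L := Ideal.span_le.2 <| by
      rintro _ ⟨l, rfl⟩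
      show (X (i l) ^ a l : MvPolynomial σ R) ∈ weightIdeal ω L
      rw [X_pow_eq_monomial]
      exact monomial_mem_weightIdeal (by rw [Finsupp.weight_single, smul_eq_mul, ha]) 1
    exact intClosure_le_weightIdeal
      ((Ideal.pow_right_mono hI n).trans (pow_weightIdeal_le L n))
  · have hX : ∀ j, X j ^ L ∈ I ^ ω j := by
      intro j
      by_cases hj : j ∈ Set.range i
      · obtain ⟨l, rfl⟩ := hj
        rw [← ha l, pow_mul]
        exact Ideal.pow_mem_pow (Ideal.subset_span (Set.mem_range_self l)) _
      · rw [hω j hj, pow_zero, Ideal.one_eq_top]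
        exact Submodule.mem_top
    intro p hp
    rw [← support_sum_monomial_coeff p]
    refine Ideal.sum_mem _ fun μ hμ => ?_
    rw [← mul_one (coeff μ p), ← C_mul_monomial]
    refine Ideal.mul_mem_left _ _ (mem_intClosure_of_pow_mem_pow_s11 hL ?_)
    rw [← pow_mul]
    exact Ideal.pow_le_pow_right (mem_weightIdeal_iff_support.1 hp μ hμ)
      (monomial_one_pow_mem_pow_weight hX μ)

end MonomialIdeal

theorem colon_mem_associatedPrimes_iff {R : Type*} [CommRing R] {J : Ideal R} {f : R} :
    Submodule.colon J (Ideal.span {f}) ∈ associatedPrimes R (R ⧸ J) ↔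
      (Submodule.colon J (Ideal.span {f})).IsPrime := by
  refine ⟨fun h => h.1, fun h => ⟨h, Ideal.Quotient.mk J f, ?_⟩⟩
  have : (⊥ : Submodule R (R ⧸ J)).colon {Ideal.Quotient.mk J f} =
      Submodule.colon J (Ideal.span {f}) := by
    ext r
    rw [Submodule.mem_colon_singleton, Ideal.mem_colon_span_singleton, Submodule.mem_bot,
      Algebra.smul_def, Ideal.Quotient.algebraMap_eq, ← map_mul, Ideal.Quotient.eq_zero_iff_mem]
  rw [this, h.radical]

section VNumber

variable {K σ : Type*} [Field K]

theorem vnumber_le {J : Ideal (MvPolynomial σ K)} {f : MvPolynomial σ K} {d : ℕ}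
    (hf : f.IsHomogeneous d) (hJf : (Submodule.colon J (Ideal.span {f})).IsPrime) :
    vnumber J ≤ d :=
  Nat.sInf_le ⟨f, hf, colon_mem_associatedPrimes_iff.2 hJf⟩

theorem le_vnumber {J : Ideal (MvPolynomial σ K)} {e : ℤ}
    (hne : ∃ (d : ℕ) (f : MvPolynomial σ K), f.IsHomogeneous d ∧
      (Submodule.colon J (Ideal.span {f})).IsPrime)
    (h : ∀ (d : ℕ) (f : MvPolynomial σ K), f.IsHomogeneous d →
      (Submodule.colon J (Ideal.span {f})).IsPrime → e ≤ d) :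
    e ≤ vnumber J := by
  obtain ⟨d₀, f₀, hf₀, hJf₀⟩ := hne
  obtain ⟨f, hf, hJf⟩ := Nat.sInf_mem (⟨d₀, f₀, hf₀, colon_mem_associatedPrimes_iff.2 hJf₀⟩ :
    {d : ℕ | ∃ f : MvPolynomial σ K, f.IsHomogeneous d ∧ Submodule.colon J (Ideal.span {f}) ∈
      associatedPrimes (MvPolynomial σ K) (MvPolynomial σ K ⧸ J)}.Nonempty)
  exact h _ f hf (colon_mem_associatedPrimes_iff.1 hJf)

variable {ω : σ → ℕ} {m : ℕ}

theorem isPrime_colon_weightIdeal_span_monomial {b : σ →₀ ℕ} (hb : Finsupp.weight ω b < m)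
    (hbj : ∀ j, ω j ≠ 0 → m ≤ Finsupp.weight ω b + ω j) :
    (Submodule.colon (weightIdeal (R := K) ω m) (Ideal.span {monomial b (1 : K)})).IsPrime := by
  rw [colon_weightIdeal_span_monomial,
    weightIdeal_eq_weightIdeal_one (Nat.sub_pos_of_lt hb) fun j hj => by have := hbj j hj; omega]
  exact isPrime_weightIdeal_one

theorem exists_degree_eq_of_isPrime_colon {d : ℕ} {f : MvPolynomial σ K} (hf : f.IsHomogeneous d)
    (hprime : (Submodule.colon (weightIdeal (R := K) ω m) (Ideal.span {f})).IsPrime) {j : σ}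
    (hj : ω j ≠ 0) :
    ∃ μ : σ →₀ ℕ, μ.degree = d ∧ Finsupp.weight ω μ < m ∧ m ≤ Finsupp.weight ω μ + ω j := by
  have hfJ : f ∉ weightIdeal ω m := fun h => hprime.ne_top <|
    (Submodule.colon_eq_top_iff_subset _).2 ((Ideal.span_singleton_le_iff_mem _).2 h)
  obtain ⟨μ, hμ, hμm⟩ : ∃ μ ∈ f.support, Finsupp.weight ω μ < m := by
    simpa [mem_weightIdeal_iff_support] using hfJ
  have hXj : X j ∈ Submodule.colon (weightIdeal (R := K) ω m) (Ideal.span {f}) := by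
    refine hprime.mem_of_pow_mem m (Ideal.le_colon ?_)
    rw [X_pow_eq_monomial]
    refine monomial_mem_weightIdeal ?_ 1
    rw [Finsupp.weight_single, smul_eq_mul]
    exact Nat.le_mul_of_pos_right m (Nat.pos_of_ne_zero hj)
  rw [Ideal.mem_colon_span_singleton, mul_comm, X, mul_monomial_mem_weightIdeal_iff,
    Finsupp.weight_single, one_smul] at hXj
  refine ⟨μ, ?_, hμm, ?_⟩
  · rw [Finsupp.degree_eq_weight_one]
    exact hf (mem_support_iff.1 hμ)
  · have := mem_weightIdeal_iff_support.1 hXj μ hμ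
    omega

end VNumber

theorem exists_weight_mul_eq {ι σ : Type*} [Fintype ι] {i : ι → σ} (hi : Function.Injective i)
    {a : ι → ℕ} (ha : ∀ l, 0 < a l) :
    ∃ L > 0, ∃ ω : σ → ℕ, (∀ l, a l * ω (i l) = L) ∧ ∀ j ∉ Set.range i, ω j = 0 := by
  classical
  refine ⟨∏ l, a l, Finset.prod_pos fun l _ => ha l,
    Function.extend i (fun l => (∏ l, a l) / a l) 0, fun l => ?_, fun j hj => ?_⟩
  · rw [hi.extend_apply, Nat.mul_div_cancel' (Finset.dvd_prod_of_mem a (Finset.mem_univ l))]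
  · exact Function.extend_apply' _ _ _ (by simpa using hj)

theorem weight_anti_of_mul_eq {ι σ : Type*} {i : ι → σ} {a : ι → ℕ} {ω : σ → ℕ} {L : ℕ}
    (hL : 0 < L) (ha : ∀ l, a l * ω (i l) = L) {l l' : ι} (h : a l ≤ a l') :
    ω (i l') ≤ ω (i l) := by
  refine Nat.le_of_mul_le_mul_left ?_ (CanonicallyOrderedAdd.mul_pos.1 (ha l ▸ hL)).1
  calc a l * ω (i l') ≤ a l' * ω (i l') := Nat.mul_le_mul_right _ h
    _ = a l * ω (i l) := by rw [ha, ha]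

theorem Nat.le_ceil_div_mul (p : ℕ) {q : ℕ} (hq : 0 < q) : p ≤ ⌈(p : ℚ) / q⌉₊ * q := by
  have := Nat.le_ceil ((p : ℚ) / q)
  rw [div_le_iff₀ (by exact_mod_cast hq)] at this
  exact_mod_cast this

theorem Nat.ceil_div_mul_lt_add (p : ℕ) {q : ℕ} (hq : 0 < q) : ⌈(p : ℚ) / q⌉₊ * q < p + q := by
  have := Nat.ceil_lt_add_one (by positivity : (0 : ℚ) ≤ p / q)
  rw [div_add_one (by positivity), lt_div_iff₀ (by exact_mod_cast hq)] at this
  exact_mod_cast this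

theorem add_ceil_sub_le_of_weight_bounds {n d b W L A₀ A₁ Aₖ w₀ w₁ wₖ : ℕ} (hL : 0 < L)
    (h₀ : A₀ * w₀ = L) (h₁ : A₁ * w₁ = L) (hₖ : Aₖ * wₖ = L) (hw : w₁ ≤ w₀)
    (hb : b * w₀ ≤ W) (hW : W + b * w₁ ≤ b * w₀ + d * w₁) (hlt : W < n * L)
    (hle : n * L ≤ W + wₖ) :
    (n : ℤ) * A₀ + ⌈(A₁ : ℚ) / A₀ - A₁ / Aₖ⌉ - 1 ≤ d := by
  have hA₀ := (CanonicallyOrderedAdd.mul_pos.1 (h₀ ▸ hL)).1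
  obtain ⟨hA₁, hw₁⟩ := CanonicallyOrderedAdd.mul_pos.1 (h₁ ▸ hL)
  have hAₖ := (CanonicallyOrderedAdd.mul_pos.1 (hₖ ▸ hL)).1
  have hbn : b < n * A₀ := Nat.lt_of_mul_lt_mul_right (a := w₀) (by rw [mul_assoc, h₀]; omega)
  -- Combine `hW` and `hle`; as `b ≤ n * A₀ - 1` and `w₁ ≤ w₀`, `b` may be replaced by `n * A₀ - 1`.
  have key : (w₀ : ℤ) - wₖ ≤ ((d : ℤ) + 1 - n * A₀) * w₁ := by
    have : ((n * A₀ - b - 1 : ℕ) : ℤ) * ((w₀ : ℤ) - w₁) ≥ 0 := by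
      have : (w₁ : ℤ) ≤ w₀ := by exact_mod_cast hw
      positivity
    push_cast [Nat.sub_sub, Nat.cast_sub (show b + 1 ≤ n * A₀ by omega)] at this
    have hW' : (W : ℤ) + b * w₁ ≤ b * w₀ + d * w₁ := by exact_mod_cast hW
    have hle' : (n : ℤ) * (A₀ * w₀) ≤ W + wₖ := by rw [← h₀] at hle; exact_mod_cast hle
    nlinarith
  -- `A₁ / A₀ = w₀ / w₁` and `A₁ / Aₖ = wₖ / w₁`, since all the products `A * w` equal `L`.
  have hcast : ∀ {x y u v : ℕ}, x * u = y * v → 0 < y → 0 < u → (x : ℚ) / y = (v : ℚ) / u :=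
    fun {_ _ _ v} h hy hu => (div_eq_div_iff (by positivity) (by positivity)).2
      (by rw [mul_comm (v : ℚ)]; exact_mod_cast h)
  have hceil : ⌈(A₁ : ℚ) / A₀ - A₁ / Aₖ⌉ ≤ (d : ℤ) + 1 - n * A₀ := by
    rw [Int.ceil_le, hcast (h₁.trans h₀.symm) hA₀ hw₁, hcast (h₁.trans hₖ.symm) hAₖ hw₁, ← sub_div,
      div_le_iff₀ (by positivity)]
    exact_mod_cast key
  linarith

section Bounds

variable {K σ : Type*} [Field K] {k' : ℕ} {i : Fin (k' + 2) → σ} {a : Fin (k' + 2) → ℕ}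
  {ω : σ → ℕ} {L n : ℕ}

noncomputable def vWitness (i : Fin (k' + 2) → σ) (a : Fin (k' + 2) → ℕ) (n : ℕ) : σ →₀ ℕ :=
  Finsupp.single (i 0) (n * a 0 - 1) +
    Finsupp.single (i (Fin.last _)) (⌈(a (Fin.last _) : ℚ) / a 0⌉₊ - 1)

theorem isPrime_colon_vWitness (hL : 0 < L) (ha : ∀ l, a l * ω (i l) = L)
    (hω : ∀ j ∉ Set.range i, ω j = 0) (hmono : Monotone a) (hn : 1 ≤ n) :
    (Submodule.colon (weightIdeal (R := K) ω (n * L))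
      (Ideal.span {monomial (vWitness i a n) (1 : K)})).IsPrime := by
  set w₀ := ω (i 0)
  set wₖ := ω (i (Fin.last _))
  have hA₀ := (CanonicallyOrderedAdd.mul_pos.1 (ha 0 ▸ hL)).1
  obtain ⟨hAₖ, hwₖ⟩ := CanonicallyOrderedAdd.mul_pos.1 (ha (Fin.last _) ▸ hL)
  have hc₁ := Nat.le_ceil_div_mul (a (Fin.last (k' + 1))) hA₀
  have hc₂ := Nat.ceil_div_mul_lt_add (a (Fin.last (k' + 1))) hA₀
  obtain ⟨p, hp⟩ : ∃ p, n * a 0 = p + 1 := Nat.exists_eq_add_one.2 (Nat.mul_pos hn hA₀)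
  obtain ⟨q, hq⟩ : ∃ q, ⌈(a (Fin.last _) : ℚ) / a 0⌉₊ = q + 1 :=
    Nat.exists_eq_add_one.2 (Nat.ceil_pos.2 (by positivity))
  rw [hq] at hc₁ hc₂
  have hweight : Finsupp.weight ω (vWitness i a n) = p * w₀ + q * wₖ := by
    simp [vWitness, hp, hq, w₀, wₖ, Finsupp.weight_single]
  have hnL : n * L = (p + 1) * w₀ := by rw [← hp, ← ha 0, mul_assoc]
  have hL' : a 0 * w₀ = a (Fin.last _) * wₖ := (ha 0).trans (ha _).symm
  refine isPrime_colon_weightIdeal_span_monomial ?_ fun j hj => ?_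
  · have : q * wₖ < w₀ := by
      refine Nat.lt_of_mul_lt_mul_left (a := a 0) ?_
      rw [hL', ← mul_assoc, mul_comm (a 0)]
      exact Nat.mul_lt_mul_of_pos_right (by linarith) hwₖ
    rw [hweight, hnL]
    linarith
  · have hj' : wₖ ≤ ω j := by
      by_cases hr : j ∈ Set.range i
      · obtain ⟨l, rfl⟩ := hr
        exact weight_anti_of_mul_eq hL ha (hmono (Fin.le_last l))
      · exact absurd (hω j hr) hj
    have : w₀ ≤ (q + 1) * wₖ := by
      refine Nat.le_of_mul_le_mul_left ?_ hA₀
      rw [hL', ← mul_assoc, mul_comm (a 0)]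
      exact Nat.mul_le_mul_right _ hc₁
    rw [hweight, hnL]
    linarith

theorem vnumber_weightIdeal_le (hL : 0 < L) (ha : ∀ l, a l * ω (i l) = L)
    (hω : ∀ j ∉ Set.range i, ω j = 0) (hmono : Monotone a) (hn : 1 ≤ n) :
    (vnumber (weightIdeal (R := K) ω (n * L)) : ℤ) ≤
      n * a 0 + ⌈(a (Fin.last (k' + 1)) : ℚ) / a 0⌉ - 2 := by
  have hA₀ := (CanonicallyOrderedAdd.mul_pos.1 (ha 0 ▸ hL)).1
  have hAₖ := (CanonicallyOrderedAdd.mul_pos.1 (ha (Fin.last _) ▸ hL)).1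
  have hc : 0 < ⌈(a (Fin.last (k' + 1)) : ℚ) / a 0⌉₊ := Nat.ceil_pos.2 (by positivity)
  have hv := vnumber_le (isHomogeneous_monomial (1 : K) rfl)
    (isPrime_colon_vWitness hL ha hω hmono hn)
  have hna : 0 < n * a 0 := Nat.mul_pos hn hA₀
  rw [← Int.natCast_ceil_eq_ceil (by positivity)]
  simp only [vWitness, map_add, Finsupp.degree_single] at hv
  omega

theorem le_vnumber_weightIdeal (hL : 0 < L) (ha : ∀ l, a l * ω (i l) = L)
    (hω : ∀ j ∉ Set.range i, ω j = 0) (hmono : Monotone a) (hn : 1 ≤ n) :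
    (n : ℤ) * a 0 + ⌈(a 1 : ℚ) / a 0 - a 1 / a (Fin.last (k' + 1))⌉ - 1 ≤
      vnumber (weightIdeal (R := K) ω (n * L)) := by
  refine le_vnumber ⟨_, _, isHomogeneous_monomial _ rfl,
    isPrime_colon_vWitness hL ha hω hmono hn⟩ fun d f hf hprime => ?_
  obtain ⟨μ, rfl, hlt, hle⟩ := exists_degree_eq_of_isPrime_colon hf hprime
    (CanonicallyOrderedAdd.mul_pos.1 (ha (Fin.last _) ▸ hL)).2.ne'
  have hω₁ : ∀ j ≠ i 0, ω j ≤ ω (i 1) := by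
    intro j hj
    by_cases hr : j ∈ Set.range i
    · obtain ⟨l, rfl⟩ := hr
      exact weight_anti_of_mul_eq hL ha (hmono (Fin.one_le_of_ne_zero fun h => hj (h ▸ rfl)))
    · rw [hω j hr]
      exact Nat.zero_le _
  exact add_ceil_sub_le_of_weight_bounds hL (ha 0) (ha 1) (ha _)
    (weight_anti_of_mul_eq hL ha (hmono (Fin.zero_le 1))) (Finsupp.apply_mul_le_weight ω μ (i 0))
    (Finsupp.weight_add_mul_le hω₁ μ) hlt hle

end Bounds

/-- Bounds for the v-numbers of the integral closure filtration of an irreducible monomial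
ideal `I = ⟨x_{i_1}^{a_1},…,x_{i_k}^{a_k}⟩` with `1 ≤ a_1 ≤ ⋯ ≤ a_k` and `k ≥ 2`
(here `k = k'+2`):  for all `n ≥ 1`,
`n·a_1 + ⌈a_2/a_1 − a_2/a_k⌉ − 1 ≤ v(closure(I^n)) ≤ n·a_1 + ⌈a_k/a_1⌉ − 2`. -/
theorem vnumber_intClosure_pow_bounds
    {K : Type*} [Field K] {σ : Type*} (k' : ℕ) (i : Fin (k' + 2) → σ)
    (hi : Function.Injective i)
    (a : Fin (k' + 2) → ℕ) (ha1 : 1 ≤ a 0) (hmono : Monotone a)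
    (I : Ideal (MvPolynomial σ K))
    (hI : I = Ideal.span (Set.range fun p => (X (i p) : MvPolynomial σ K) ^ a p))
    (n : ℕ) (hn : 1 ≤ n) :
    (n : ℤ) * a 0 + ⌈(a 1 : ℚ) / (a 0 : ℚ) - (a 1 : ℚ) / (a (Fin.last (k' + 1)) : ℚ)⌉ - 1
        ≤ (vnumber (intClosure (I ^ n)) : ℤ) ∧
    (vnumber (intClosure (I ^ n)) : ℤ)
        ≤ (n : ℤ) * a 0 + ⌈(a (Fin.last (k' + 1)) : ℚ) / (a 0 : ℚ)⌉ - 2 := by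
  obtain ⟨L, hL, ω, ha, hω⟩ := exists_weight_mul_eq hi fun l => ha1.trans (hmono (Fin.zero_le l))
  rw [hI, intClosure_pow_eq_weightIdeal hL ha hω n]
  exact ⟨le_vnumber_weightIdeal hL ha hω hmono hn, vnumber_weightIdeal_le hL ha hω hmono hn⟩
end
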